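/- arXiv:2209.06991 — 10 statements merged into one kernel-verified Lean document; each statement's English description precedes it below -/
import Mathlib

section
/- Let k ≥ 3 and let G = (V,E) be a K_k-free graph on n vertices. If |E| = ex(n,K_k) − t for some integer t ≥ 0, then there exists a partition V = V₁ ∪ ⋯ ∪ V_{k−1} of the vertex set into k−1 parts such that the total number of edges of G with both endpoints inside a single part satisfies Σ_{i=1}^{k−1} e_G(V_i) ≤ t. -/
open SimpleGraph

/-- `edgesInside G W` is the number of edges of `G` with both endpoints in `W`. -/
noncomputable def edgesInside {V : Type*} (G : SimpleGraph V) (W : Set V) : ℕ :=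
  Nat.card {e : G.edgeSet // ∀ v ∈ (e : Sym2 V), v ∈ W}

/-- The Turán number `ex(n, K_k)`: the maximum number of edges of an `n`-vertex graph
containing no copy of `K_k`. -/
noncomputable def exNum (n k : ℕ) : ℕ :=
  sSup {m | ∃ G : SimpleGraph (Fin n), G.CliqueFree k ∧ Nat.card G.edgeSet = m}

namespace Stmt3Aux

open Finset

variable {V : Type*} [Fintype V] [DecidableEq V]

section counting
variable (G : SimpleGraph V) [DecidableRel G.Adj] (S : Finset V)

/-- edges inside S -/
def inE : ℕ := (G.edgeFinset.filter (fun e => ∀ v ∈ e, v ∈ S)).card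
/-- edges crossing S -/
def crossE : ℕ := (G.edgeFinset.filter (fun e => ¬(∀ v ∈ e, v ∈ S) ∧ ¬(∀ v ∈ e, v ∉ S))).card

lemma edge_partition : G.edgeFinset.card = inE G S + inE G Sᶜ + crossE G S := by
  classical
  rw [inE, inE, crossE]
  have h1 := Finset.card_filter_add_card_filter_not
    (s := G.edgeFinset) (p := fun e => ∀ v ∈ e, v ∈ S)
  have h2 := Finset.card_filter_add_card_filter_not
    (s := G.edgeFinset.filter (fun e => ¬(∀ v ∈ e, v ∈ S))) (p := fun e => ∀ v ∈ e, v ∉ S)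
  rw [Finset.filter_filter, Finset.filter_filter] at h2
  have h3 : G.edgeFinset.filter (fun e => ¬(∀ v ∈ e, v ∈ S) ∧ ∀ v ∈ e, v ∉ S)
      = G.edgeFinset.filter (fun e => ∀ v ∈ e, v ∈ Sᶜ) := by
    apply Finset.filter_congr
    intro e he
    induction e with
    | _ a b => simp only [Sym2.mem_iff, Finset.mem_compl]
               constructor
               · rintro ⟨-, h⟩ v hv; exact h v hv
               · intro h
                 refine ⟨fun hh => h a (Or.inl rfl) (hh a (Or.inl rfl)), h⟩
  rw [h3] at h2
  omega

lemma sum_degree_eq : ∑ v ∈ S, G.degree v = 2 * inE G S + crossE G S := by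
  classical
  have h1 : ∑ v ∈ S, G.degree v = (univ.filter (fun d : G.Dart => d.fst ∈ S)).card := by
    rw [Finset.card_eq_sum_card_fiberwise (f := fun d : G.Dart => d.fst) (s := univ.filter (fun d : G.Dart => d.fst ∈ S)) (t := S)
      (fun d hd => (Finset.mem_filter.mp hd).2)]
    apply Finset.sum_congr rfl
    intro v hv
    rw [← G.dart_fst_fiber_card_eq_degree v]
    congr 1
    ext d
    simp only [Finset.mem_filter, Finset.mem_univ, true_and]
    exact ⟨fun h => ⟨h ▸ hv, h⟩, fun h => h.2⟩
  have h2 := Finset.card_filter_add_card_filter_not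
    (s := univ.filter (fun d : G.Dart => d.fst ∈ S)) (p := fun d => d.snd ∈ S)
  rw [Finset.filter_filter, Finset.filter_filter] at h2
  have h3 : (univ.filter (fun d : G.Dart => d.fst ∈ S ∧ d.snd ∈ S)).card = 2 * inE G S := by
    rw [inE, Finset.card_eq_sum_card_fiberwise (f := fun d : G.Dart => d.edge)
      (t := G.edgeFinset.filter (fun e => ∀ v ∈ e, v ∈ S)) ?map]
    case map =>
      intro d hd
      simp only [Finset.coe_filter, Finset.mem_coe, Finset.mem_filter, Finset.mem_univ, true_and, Set.mem_setOf_eq] at hd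
      have hedge : d.edge = s(d.fst, d.snd) := rfl
      rw [Finset.mem_coe, Finset.mem_filter, mem_edgeFinset]
      refine ⟨d.edge_mem, ?_⟩
      intro v hv
      have hv' : v ∈ s(d.fst, d.snd) := hv
      rcases Sym2.mem_iff.mp hv' with rfl | rfl
      · exact hd.1
      · exact hd.2
    rw [Finset.sum_congr rfl (g := fun _ => 2) ?fib, Finset.sum_const, smul_eq_mul, mul_comm]
    case fib =>
      intro e he
      simp only [Finset.mem_filter, mem_edgeFinset] at he
      rw [← G.dart_edge_fiber_card e he.1]
      congr 1
      ext d
      simp only [Finset.mem_filter, Finset.mem_univ, true_and, Set.mem_setOf_eq]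
      constructor
      · rintro ⟨-, h⟩; exact h
      · rintro rfl
        have h1 : d.fst ∈ d.edge := Sym2.mem_mk_left _ _
        have h2 : d.snd ∈ d.edge := Sym2.mem_mk_right _ _
        exact ⟨⟨he.2 _ h1, he.2 _ h2⟩, rfl⟩
  have h4 : (univ.filter (fun d : G.Dart => d.fst ∈ S ∧ ¬ d.snd ∈ S)).card = crossE G S := by
    rw [crossE, Finset.card_eq_sum_card_fiberwise (f := fun d : G.Dart => d.edge)
      (t := G.edgeFinset.filter (fun e => ¬(∀ v ∈ e, v ∈ S) ∧ ¬(∀ v ∈ e, v ∉ S))) ?map]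
    case map =>
      intro d hd
      simp only [Finset.coe_filter, Finset.mem_coe, Finset.mem_filter, Finset.mem_univ, true_and, Set.mem_setOf_eq] at hd
      rw [Finset.mem_coe, Finset.mem_filter, mem_edgeFinset]
      refine ⟨d.edge_mem, ?_, ?_⟩
      · intro hall; exact hd.2 (hall _ (Sym2.mem_mk_right _ _))
      · intro hall; exact hall _ (Sym2.mem_mk_left _ _) hd.1
    rw [Finset.sum_congr rfl (g := fun _ => 1) ?fib, Finset.sum_const, smul_eq_mul, mul_one]
    case fib =>
      intro e he
      simp only [Finset.mem_filter, mem_edgeFinset] at he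
      obtain ⟨he1, he2, he3⟩ := he
      induction e with
      | _ a b =>
        rw [mem_edgeSet] at he1
        simp only [Sym2.mem_iff, forall_eq_or_imp, forall_eq] at he2 he3
        by_cases haS : a ∈ S
        · have hbS : b ∉ S := fun hb => he2 ⟨haS, hb⟩
          have : (univ.filter (fun d : G.Dart => d.fst ∈ S ∧ ¬ d.snd ∈ S)).filter
              (fun d => d.edge = s(a,b)) = {SimpleGraph.Dart.mk (a,b) he1} := by
            ext d
            simp only [Finset.mem_filter, Finset.mem_univ, true_and, Finset.mem_singleton]
            constructor
            · rintro ⟨⟨hd1, hd2⟩, hd3⟩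
              have := (G.dart_edge_eq_iff d (SimpleGraph.Dart.mk (a,b) he1)).mp
                (by rw [hd3]; rfl)
              rcases this with rfl | rfl
              · rfl
              · exact absurd hd1 (by simpa using hbS)
            · rintro rfl
              exact ⟨⟨haS, hbS⟩, rfl⟩
          rw [this, Finset.card_singleton]
        · have hbS : b ∈ S := by
            by_contra hb; exact he3 ⟨haS, hb⟩
          have : (univ.filter (fun d : G.Dart => d.fst ∈ S ∧ ¬ d.snd ∈ S)).filter
              (fun d => d.edge = s(a,b)) = {SimpleGraph.Dart.mk (b,a) he1.symm} := by
            ext d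
            simp only [Finset.mem_filter, Finset.mem_univ, true_and, Finset.mem_singleton]
            constructor
            · rintro ⟨⟨hd1, hd2⟩, hd3⟩
              have := (G.dart_edge_eq_iff d (SimpleGraph.Dart.mk (b,a) he1.symm)).mp
                (by rw [hd3, Dart.edge_mk, Sym2.eq_swap])
              rcases this with rfl | rfl
              · rfl
              · exact absurd hd1 (by simpa using haS)
            · rintro rfl
              exact ⟨⟨hbS, haS⟩, by rw [Dart.edge_mk, Sym2.eq_swap]⟩
          rw [this, Finset.card_singleton]
  omega

lemma edgesInside_coe :
    edgesInside G ↑S = (G.edgeFinset.filter (fun e => ∀ v ∈ e, v ∈ S)).card := by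
  classical
  rw [edgesInside]
  rw [Nat.card_congr (Equiv.subtypeSubtypeEquivSubtypeInter (· ∈ G.edgeSet)
    (fun e => ∀ v ∈ e, v ∈ (↑S : Set V)))]
  have hset : {e : Sym2 V | e ∈ G.edgeSet ∧ ∀ v ∈ e, v ∈ (↑S : Set V)}
      = ↑(G.edgeFinset.filter (fun e => ∀ v ∈ e, v ∈ S)) := by
    ext e; simp [mem_edgeFinset]
  rw [← Set.ncard_coe_finset, ← hset, ← Nat.card_coe_set_eq]
  rfl

lemma edgesInside_coe' : edgesInside G ↑S = inE G S := by
  classical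
  rw [edgesInside_coe, inE]

lemma card_edgeFinset_eq_nat_card : G.edgeFinset.card = Nat.card G.edgeSet := by
  rw [Nat.card_coe_set_eq, Set.ncard_eq_toFinset_card']
  congr 1

/-- the key inequality coming from double counting -/
lemma key_identity :
    edgesInside G ((↑S : Set V)ᶜ) + G.edgeFinset.card
      = ∑ v ∈ Sᶜ, G.degree v + edgesInside G ↑S := by
  classical
  have hco : ((↑S : Set V)ᶜ) = ↑(Sᶜ) := by
    rw [Finset.coe_compl]
  rw [hco, edgesInside_coe' G (Sᶜ), edgesInside_coe' G S,
    edge_partition G S, sum_degree_eq G (Sᶜ)]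
  have hcross : crossE G Sᶜ = crossE G S := by
    rw [crossE, crossE]
    congr 1
    apply Finset.filter_congr
    intro e _
    simp only [Finset.mem_compl, not_not]
    tauto
  rw [hcross]
  ring
end counting

lemma edgesInside_comap {α β : Type*} {f : α → β} (hf : Function.Injective f)
    (G : SimpleGraph β) (T : Set α) :
    edgesInside (G.comap f) T = edgesInside G (f '' T) := by
  rw [edgesInside, edgesInside]
  apply Nat.card_congr
  have mem1 : ∀ e : Sym2 α, e ∈ (G.comap f).edgeSet ↔ Sym2.map f e ∈ G.edgeSet := by
    intro e; induction e with
    | _ a b => simp [Sym2.map_pair_eq]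
  have mem2 : ∀ (e : Sym2 α), (∀ v ∈ e, v ∈ T) → ∀ v ∈ Sym2.map f e, v ∈ f '' T := by
    intro e he v hv
    obtain ⟨a, ha, rfl⟩ := Sym2.mem_map.mp hv
    exact ⟨a, he a ha, rfl⟩
  refine Equiv.ofBijective
    (fun p => ⟨⟨Sym2.map f p.1.1, (mem1 _).mp p.1.2⟩, mem2 _ p.2⟩) ⟨?_, ?_⟩
  · intro p q h
    apply Subtype.ext; apply Subtype.ext
    exact Sym2.map.injective hf (congrArg (fun x => x.1.1) h)
  · rintro ⟨⟨e, he⟩, hT⟩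
    have hT' : ∀ v ∈ e, v ∈ f '' T := hT
    have key : ∃ e₀ : Sym2 α, Sym2.map f e₀ = e ∧ (∀ v ∈ e₀, v ∈ T) := by
      clear hT he
      induction e with
      | _ x y =>
        obtain ⟨a, ha, rfl⟩ := hT' x (Sym2.mem_mk_left x y)
        obtain ⟨b, hb, rfl⟩ := hT' _ (Sym2.mem_mk_right _ _)
        refine ⟨s(a, b), Sym2.map_pair_eq f a b, fun v hv => ?_⟩
        rcases Sym2.mem_iff.mp hv with rfl | rfl <;> assumption
    obtain ⟨e₀, rfl, hT₀⟩ := key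
    refine ⟨⟨⟨e₀, (mem1 _).mpr he⟩, hT₀⟩, rfl⟩

lemma edgesInside_univ {α : Type*} (G : SimpleGraph α) :
    edgesInside G Set.univ = Nat.card G.edgeSet := by
  rw [edgesInside]
  exact Nat.card_congr (Equiv.subtypeUnivEquiv (fun e => by simp))

lemma edgesInside_bot {α : Type*} (T : Set α) :
    edgesInside (⊥ : SimpleGraph α) T = 0 := by
  have : IsEmpty ((⊥ : SimpleGraph α).edgeSet) := by
    rw [edgeSet_bot]; exact Set.isEmpty_coe_sort.mpr rfl
  rw [edgesInside]
  exact Nat.card_of_isEmpty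

lemma card_le_exNum {n k : ℕ} {G : SimpleGraph (Fin n)} (h : G.CliqueFree k) :
    Nat.card G.edgeSet ≤ exNum n k := by
  apply le_csSup
  · refine ⟨Fintype.card (Sym2 (Fin n)), ?_⟩
    rintro m ⟨H, -, rfl⟩
    exact le_trans (Nat.card_le_card_of_injective _ Subtype.val_injective)
      (by rw [Nat.card_eq_fintype_card])
  · exact ⟨G, h, rfl⟩

lemma exNum_exists (m k : ℕ) (hk : 2 ≤ k) :
    ∃ H : SimpleGraph (Fin m), H.CliqueFree k ∧ Nat.card H.edgeSet = exNum m k := by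
  have hne : {x | ∃ G : SimpleGraph (Fin m), G.CliqueFree k ∧ Nat.card G.edgeSet = x}.Nonempty := by
    refine ⟨0, ⊥, cliqueFree_bot hk, ?_⟩
    have : IsEmpty ((⊥ : SimpleGraph (Fin m)).edgeSet) := by
      rw [edgeSet_bot]; exact Set.isEmpty_coe_sort.mpr rfl
    exact Nat.card_of_isEmpty
  have hbdd : BddAbove {x | ∃ G : SimpleGraph (Fin m), G.CliqueFree k ∧ Nat.card G.edgeSet = x} := by
    refine ⟨Fintype.card (Sym2 (Fin m)), ?_⟩
    rintro x ⟨H, -, rfl⟩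
    exact le_trans (Nat.card_le_card_of_injective _ Subtype.val_injective)
      (by rw [Nat.card_eq_fintype_card])
  obtain ⟨H, hH1, hH2⟩ := Nat.sSup_mem hne hbdd
  exact ⟨H, hH1, hH2⟩

/-- the join of `H` with an independent set indexed by `β` -/
def joinGraph {α β : Type*} (H : SimpleGraph α) : SimpleGraph (α ⊕ β) where
  Adj x y := match x, y with
    | .inl a, .inl b => H.Adj a b
    | .inl _, .inr _ => True
    | .inr _, .inl _ => True
    | .inr _, .inr _ => False
  symm := ⟨by rintro (a|a) (b|b) h <;> first | trivial | exact h.symm⟩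
  loopless := ⟨by rintro (a|a) h <;> first | exact H.irrefl h | exact h⟩

lemma joinGraph_cliqueFree {α β : Type*} {j : ℕ} (H : SimpleGraph α) (hH : H.CliqueFree j) :
    (joinGraph (β := β) H).CliqueFree (j + 1) := by
  classical
  intro s hs
  have hsr : (s.filter (fun x => ¬ (Sum.isLeft x = true))).card ≤ 1 := by
    apply Finset.card_le_one.mpr
    intro a ha b hb
    simp only [Finset.mem_filter] at ha hb
    by_contra hne
    have hadj := hs.1 ha.1 hb.1 hne
    rcases a with a | a
    · simp at ha
    rcases b with b | b
    · simp at hb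
    exact hadj
  have hslcard : j ≤ (s.filter (fun x => Sum.isLeft x = true)).card := by
    have := Finset.card_filter_add_card_filter_not
      (s := s) (p := fun x => Sum.isLeft x = true)
    rw [hs.2] at this
    omega
  set t : Finset α := s.preimage Sum.inl Sum.inl_injective.injOn with ht
  have htl : s.filter (fun x => Sum.isLeft x = true) = t.image Sum.inl := by
    ext x
    simp only [ht, Finset.mem_filter, Finset.mem_image, Finset.mem_preimage]
    constructor
    · rintro ⟨hx, hleft⟩
      rcases x with a | a
      · exact ⟨a, hx, rfl⟩
      · simp at hleft
    · rintro ⟨a, ha, rfl⟩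
      exact ⟨ha, rfl⟩
  have htcard : j ≤ t.card := by
    rwa [htl, Finset.card_image_of_injective _ Sum.inl_injective] at hslcard
  obtain ⟨t', ht'sub, ht'card⟩ := Finset.exists_subset_card_eq htcard
  refine hH t' ⟨?_, ht'card⟩
  intro a ha b hb hne
  have := hs.1 (x := Sum.inl a) (y := Sum.inl b) ?_ ?_ (by simpa using hne)
  · exact this
  · exact Finset.mem_preimage.mp (ht'sub ha)
  · exact Finset.mem_preimage.mp (ht'sub hb)

lemma joinGraph_card_edges {α β : Type*} [Fintype α] [Fintype β] [DecidableEq α] [DecidableEq β]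
    (H : SimpleGraph α) :
    Nat.card (joinGraph (β := β) H).edgeSet
      = Nat.card H.edgeSet + Fintype.card α * Fintype.card β := by
  classical
  set J := joinGraph (β := β) H with hJ
  set S : Finset (α ⊕ β) := univ.image Sum.inl with hS
  have hcomapl : J.comap Sum.inl = H := by
    ext a b; rfl
  have hcomapr : J.comap (Sum.inr : β → α ⊕ β) = ⊥ := by
    ext a b
    constructor
    · intro h; exact h
    · intro h; exact absurd h (by simp)
  have hSl : (↑S : Set (α ⊕ β)) = Sum.inl '' Set.univ := by
    simp [hS, Set.ext_iff]
  have hScl : ((↑S : Set (α ⊕ β))ᶜ) = Sum.inr '' Set.univ := by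
    ext x
    rcases x with a | a <;> simp [hS]
  have hin : inE J S = Nat.card H.edgeSet := by
    rw [← edgesInside_coe', hSl, ← edgesInside_comap Sum.inl_injective, hcomapl,
      edgesInside_univ]
  have hincl : inE J Sᶜ = 0 := by
    rw [← edgesInside_coe', Finset.coe_compl, hScl,
      ← edgesInside_comap Sum.inr_injective, hcomapr, edgesInside_bot]
  have hcross : crossE J S = Fintype.card α * Fintype.card β := by
    rw [crossE, ← Fintype.card_prod, ← Finset.card_univ]
    refine (Finset.card_bij (i := fun (p : α × β) _ => s(Sum.inl p.1, Sum.inr p.2)) ?_ ?_ ?_).symm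
    · intro p _
      simp only [Finset.mem_filter, mem_edgeFinset, mem_edgeSet]
      refine ⟨trivial, ?_, ?_⟩
      · intro hall
        have := hall (Sum.inr p.2) (Sym2.mem_mk_right _ _)
        simp [hS] at this
      · intro hall
        exact hall (Sum.inl p.1) (Sym2.mem_mk_left _ _) (by simp [hS])
    · intro p _ q _ h
      rw [Sym2.eq_iff] at h
      rcases h with ⟨h1, h2⟩ | ⟨h1, h2⟩
      · exact Prod.ext (Sum.inl_injective h1) (Sum.inr_injective h2)
      · exact absurd h1 (by simp)
    · intro e he
      simp only [Finset.mem_filter, mem_edgeFinset] at he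
      obtain ⟨he1, he2, he3⟩ := he
      induction e with
      | _ x y =>
        rcases x with a | a <;> rcases y with b | b
        · exfalso
          apply he2
          intro v hv
          rcases Sym2.mem_iff.mp hv with rfl | rfl <;> simp [hS]
        · exact ⟨(a, b), Finset.mem_univ _, rfl⟩
        · exact ⟨(b, a), Finset.mem_univ _, Sym2.eq_swap⟩
        · exfalso
          apply he3
          intro v hv
          rcases Sym2.mem_iff.mp hv with rfl | rfl <;> simp [hS]
  have := edge_partition J S
  rw [hin, hincl, hcross, card_edgeFinset_eq_nat_card] at this
  omega

lemma exNum_step {j d n : ℕ} (hj : 2 ≤ j) (hdn : d ≤ n) :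
    exNum d j + d * (n - d) ≤ exNum n (j + 1) := by
  classical
  obtain ⟨H, hHfree, hHcard⟩ := exNum_exists d j hj
  set J := joinGraph (β := Fin (n - d)) H with hJ
  have hn : n = d + (n - d) := by omega
  let ε : Fin n ≃ (Fin d ⊕ Fin (n - d)) := (finCongr hn).trans finSumFinEquiv.symm
  have hfree : (J.comap ε).CliqueFree (j + 1) :=
    (joinGraph_cliqueFree H hHfree).comap (SimpleGraph.Embedding.comap ε.toEmbedding J).isContained
  have hcard : Nat.card (J.comap ε).edgeSet = exNum d j + d * (n - d) := by
    rw [← edgesInside_univ, edgesInside_comap ε.injective, Set.image_univ,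
      Equiv.range_eq_univ, edgesInside_univ, hJ, joinGraph_card_edges, hHcard]
    simp
  calc exNum d j + d * (n - d) = Nat.card (J.comap ε).edgeSet := hcard.symm
    _ ≤ exNum n (j + 1) := card_le_exNum hfree

end Stmt3Aux

open Stmt3Aux Finset in
lemma stmt3_aux : ∀ k : ℕ, 2 ≤ k → ∀ n : ℕ, ∀ G : SimpleGraph (Fin n), G.CliqueFree k →
    ∀ t, Nat.card G.edgeSet + t = exNum n k →
    ∃ f : Fin n → Fin (k - 1), ∑ i : Fin (k - 1), edgesInside G (f ⁻¹' {i}) ≤ t := by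
  intro k hk
  induction k, hk using Nat.le_induction with
  | base =>
    intro n G hfree t hE
    refine ⟨fun _ => 0, ?_⟩
    have hbot : G = ⊥ := SimpleGraph.cliqueFree_two.mp hfree
    subst hbot
    simp [edgesInside_bot]
  | succ k hk IH =>
    intro n G hfree t hE
    classical
    haveI : DecidableRel G.Adj := Classical.decRel _
    obtain ⟨K, rfl⟩ : ∃ K, k = K + 1 := ⟨k - 1, by omega⟩
    by_cases hn0 : n = 0
    · subst hn0
      refine ⟨fun v => v.elim0, ?_⟩
      have hbot : G = ⊥ := by
        ext a b; exact a.elim0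
      subst hbot
      simp [edgesInside_bot]
    -- pick a vertex of maximum degree
    have huniv : (univ : Finset (Fin n)).Nonempty :=
      ⟨⟨0, Nat.pos_of_ne_zero hn0⟩, mem_univ _⟩
    obtain ⟨x, -, hx⟩ := Finset.exists_max_image (univ : Finset (Fin n))
      (fun v => G.degree v) huniv
    set d := G.degree x with hd
    set W := G.neighborFinset x with hW
    have hWcard : W.card = d := rfl
    have hdn : d ≤ n := by
      calc d = W.card := hWcard.symm
        _ ≤ Fintype.card (Fin n) := Finset.card_le_univ _
        _ = n := Fintype.card_fin n
    have hWc : Fintype.card ↥W = d := by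
      rw [Fintype.card_coe]; exact hWcard
    let eW : Fin d ≃ ↥W := (Fintype.equivFinOfCardEq hWc).symm
    let ι : Fin d → Fin n := fun i => ↑(eW i)
    have hι : Function.Injective ι := fun i j h =>
      eW.injective (Subtype.ext h)
    have hrange : Set.range ι = ↑W := by
      ext v
      constructor
      · rintro ⟨i, rfl⟩; exact (eW i).2
      · intro hv; exact ⟨eW.symm ⟨v, hv⟩, by simp [ι]⟩
    set G'' : SimpleGraph (Fin d) := G.comap ι with hG''
    haveI : DecidableRel G''.Adj := Classical.decRel _
    have hfree'' : G''.CliqueFree (K + 1) := by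
      intro s hs
      have himg : G.IsNClique (K + 1) (s.image ι) := by
        constructor
        · intro a ha b hb hne
          simp only [Finset.coe_image, Set.mem_image, Finset.mem_coe] at ha hb
          obtain ⟨a', ha', rfl⟩ := ha
          obtain ⟨b', hb', rfl⟩ := hb
          exact hs.1 ha' hb' (fun h => hne (congrArg ι h))
        · rw [Finset.card_image_of_injective _ hι, hs.2]
      have hxadj : ∀ b ∈ s.image ι, G.Adj x b := by
        intro b hb
        obtain ⟨b', -, rfl⟩ := Finset.mem_image.mp hb
        have : ι b' ∈ W := (eW b').2
        exact (SimpleGraph.mem_neighborFinset G x _).mp this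
      have hins := himg.insert hxadj
      exact hfree _ hins
    have hle'' : Nat.card G''.edgeSet ≤ exNum d (K + 1) := card_le_exNum hfree''
    obtain ⟨g, hg⟩ := IH d G'' hfree'' (exNum d (K + 1) - Nat.card G''.edgeSet) (by omega)
    set t' := exNum d (K + 1) - Nat.card G''.edgeSet with ht'
    -- define the partition
    refine ⟨fun v => if h : v ∈ W then Fin.castSucc (g (eW.symm ⟨v, h⟩)) else Fin.last K, ?_⟩
    set f : Fin n → Fin (K + 1) :=
      fun v => if h : v ∈ W then Fin.castSucc (g (eW.symm ⟨v, h⟩)) else Fin.last K with hf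
    have hpre1 : ∀ i : Fin K, f ⁻¹' {Fin.castSucc i} = ι '' (g ⁻¹' {i}) := by
      intro i
      ext v
      simp only [Set.mem_preimage, Set.mem_singleton_iff, Set.mem_image, hf]
      constructor
      · intro hv
        by_cases h : v ∈ W
        · rw [dif_pos h] at hv
          refine ⟨eW.symm ⟨v, h⟩, Fin.castSucc_injective _ hv, by simp [ι]⟩
        · rw [dif_neg h] at hv
          exact absurd hv.symm (Fin.castSucc_lt_last i).ne
      · rintro ⟨j, hj, rfl⟩
        have hjW : ι j ∈ W := (eW j).2
        rw [dif_pos hjW]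
        have : eW.symm ⟨ι j, hjW⟩ = j := by
          apply eW.injective; simp [ι]
        rw [this, hj]
    have hpre2 : f ⁻¹' {Fin.last K} = (↑W : Set (Fin n))ᶜ := by
      ext v
      simp only [Set.mem_preimage, Set.mem_singleton_iff, Set.mem_compl_iff,
        Finset.mem_coe, hf]
      by_cases h : v ∈ W
      · rw [dif_pos h]
        constructor
        · intro hc
          exact absurd hc (Fin.castSucc_lt_last _).ne
        · intro hc
          exact absurd h hc
      · rw [dif_neg h]
        simp [h]
    -- assemble the estimate
    show ∑ i : Fin (K + 1), edgesInside G (f ⁻¹' {i}) ≤ t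
    rw [Fin.sum_univ_castSucc]
    have hsum1 : ∀ i : Fin K, edgesInside G (f ⁻¹' {Fin.castSucc i})
        = edgesInside G'' (g ⁻¹' {i}) := by
      intro i
      rw [hpre1 i, hG'', edgesInside_comap hι]
    have hsum1' : ∑ i : Fin K, edgesInside G (f ⁻¹' {Fin.castSucc i}) ≤ t' := by
      rw [Finset.sum_congr rfl (fun i _ => hsum1 i)]
      exact hg
    have hkey := key_identity G W
    have hdegsum : ∑ v ∈ Wᶜ, G.degree v ≤ (n - d) * d := by
      calc ∑ v ∈ Wᶜ, G.degree v ≤ ∑ _v ∈ Wᶜ, d :=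
            Finset.sum_le_sum (fun v _ => hx v (mem_univ v))
        _ = Wᶜ.card * d := by rw [Finset.sum_const, smul_eq_mul]
        _ = (n - d) * d := by
            rw [Finset.card_compl, hWcard, Fintype.card_fin]
    have hinW : edgesInside G ↑W = Nat.card G''.edgeSet := by
      rw [← hrange, ← Set.image_univ, ← edgesInside_comap hι, ← hG'', edgesInside_univ]
    have hstep : exNum d (K + 1) + d * (n - d) ≤ exNum n (K + 2) := exNum_step hk hdn
    have hG : G.edgeFinset.card = Nat.card G.edgeSet := card_edgeFinset_eq_nat_card G
    rw [hpre2]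
    have hEn : Nat.card G.edgeSet + t = exNum n (K + 2) := hE
    have hmul : (n - d) * d = d * (n - d) := Nat.mul_comm _ _
    omega

theorem stmt3 (k n t : ℕ) (hk : 3 ≤ k) (G : SimpleGraph (Fin n))
    (hfree : G.CliqueFree k) (hE : Nat.card G.edgeSet + t = exNum n k) :
    ∃ f : Fin n → Fin (k - 1),
      ∑ i : Fin (k - 1), edgesInside G (f ⁻¹' {i}) ≤ t :=
  stmt3_aux k (by omega) n G hfree t hE
end

section
/- Let n and t be positive integers with 0 < t < n²/16, and let G be a triangle-free graph on n vertices with exactly ⌊n²/4⌋ − t edges. If G′ is obtained from G by adding a set F of at least 5t edges not belonging to G (on the same vertex set), then G′ contains a triangle exactly one of whose edges belongs to F. -/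
open SimpleGraph Finset

private lemma stmt4_arith (N M T R A B Bo : ℤ)
    (F2 : 10 * T ≤ Bo) (F3 : 4 * M ≤ N * (A + B))
    (hD : 4 * M = N ^ 2 - R - 4 * T) (F5 : R ≤ 1) (Fr : 0 ≤ R)
    (F6 : 16 * T + 1 ≤ N ^ 2) (F7 : 1 ≤ T) (F8 : 5 ≤ N)
    (hBoU : Bo ≤ N * N - N - 2 * M - (A * A - A) - (B * B - B)) : False := by
  have q0 : (0:ℤ) ≤ (3 * N + 1) * (N - 3) :=
    mul_nonneg (by linarith) (by linarith)
  have e2 : 2 * N ≤ 4 * M := by nlinarith [q0]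
  have e5 : (0:ℤ) ≤ (N * (A + B) - 4 * M) * (N * (A + B) + 4 * M - 2 * N) :=
    mul_nonneg (by linarith) (by linarith)
  have s2 : (N * (A + B)) ^ 2 ≤ 2 * N ^ 2 * (A * A + B * B) := by
    nlinarith [sq_nonneg (N * (A - B))]
  have K4 : -(N * (A + B)) ^ 2 + 2 * N * (N * (A + B)) ≤ -16 * M ^ 2 + 8 * M * N := by
    nlinarith [e5]
  have K1 := mul_le_mul_of_nonneg_left hBoU (by positivity : (0:ℤ) ≤ 2 * N ^ 2)
  have P1 : 2 * N ^ 2 * Bo ≤ 2 * N ^ 2 * (N * N - N - 2 * M) - 16 * M ^ 2 + 8 * M * N := by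
    nlinarith [K1, s2, K4]
  have P2 : 2 * N ^ 2 * (10 * T) ≤ 2 * N ^ 2 * Bo :=
    mul_le_mul_of_nonneg_left F2 (by positivity)
  have P4 : 2 * N ^ 2 * (N * N - N - 2 * M) - 16 * M ^ 2 + 8 * M * N
      = 3 * N ^ 2 * R + 12 * T * N ^ 2 - (R + 4 * T) ^ 2 - 2 * N * R - 8 * T * N := by
    linear_combination (-(4:ℤ) * M - 2 * N ^ 2 + 2 * N + R + 4 * T) * hD
  have q1 : (0:ℤ) ≤ (T - 1) * N ^ 2 := mul_nonneg (by linarith) (by positivity)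
  have q2 : (0:ℤ) ≤ (1 - R) * N ^ 2 := mul_nonneg (by linarith) (by positivity)
  have q3 : (0:ℤ) ≤ (R + 4 * T) ^ 2 := sq_nonneg _
  have q4 : (0:ℤ) ≤ N * R := mul_nonneg (by linarith) Fr
  have q5 : (0:ℤ) ≤ T * N := mul_nonneg (by linarith) (by linarith)
  have q6 : (25:ℤ) ≤ N ^ 2 := by nlinarith [F8]
  linarith [P1, P2, P4, q1, q2, q3, q4, q5, q6]

set_option maxHeartbeats 1000000 in
theorem stmt4 (n t : ℕ) (hn : 0 < n) (ht : 0 < t) (ht2 : (t : ℝ) < (n : ℝ) ^ 2 / 16)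
    (G G' : SimpleGraph (Fin n)) (hGfree : G.CliqueFree 3)
    (hE : Nat.card G.edgeSet + t = n ^ 2 / 4)
    (hsub : G ≤ G')
    -- the set `F` of new edges (edges of `G'` not in `G`) has at least `5 t` elements
    (hF : 5 * t ≤ Nat.card {e : G'.edgeSet // (e : Sym2 (Fin n)) ∉ G.edgeSet}) :
    ∃ a b c : Fin n, G'.Adj a b ∧ G'.Adj b c ∧ G'.Adj a c ∧
      ((s(a, b) ∉ G.edgeSet ∧ s(b, c) ∈ G.edgeSet ∧ s(a, c) ∈ G.edgeSet) ∨
       (s(a, b) ∈ G.edgeSet ∧ s(b, c) ∉ G.edgeSet ∧ s(a, c) ∈ G.edgeSet) ∨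
       (s(a, b) ∈ G.edgeSet ∧ s(b, c) ∈ G.edgeSet ∧ s(a, c) ∉ G.edgeSet)) := by
  classical
  by_contra hcon
  -- no triangle in G
  have tri : ∀ u v w : Fin n, G.Adj u v → G.Adj u w → G.Adj v w → False := by
    intro u v w h1 h2 h3
    exact hGfree {u, v, w} (is3Clique_triple_iff.mpr ⟨h1, h2, h3⟩)
  set d : Fin n → ℕ := fun v => G.degree v with hd
  set m : ℕ := G.edgeFinset.card with hmdef
  -- numeric facts
  have hm : m + t = n ^ 2 / 4 := by
    rw [← hE]; congr 1
    rw [Nat.card_coe_set_eq, Set.ncard_eq_toFinset_card']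
    rw [hmdef, SimpleGraph.edgeFinset]
  have hr : n ^ 2 % 4 = 0 ∨ n ^ 2 % 4 = 1 := by
    rcases Nat.even_or_odd n with ⟨k, hk⟩ | ⟨k, hk⟩
    · left; subst hk; have : (k + k) ^ 2 = 4 * k ^ 2 := by ring
      omega
    · right; subst hk; have : (2 * k + 1) ^ 2 = 4 * (k ^ 2 + k) + 1 := by ring
      omega
  have h4 : 4 * (m + t) + n ^ 2 % 4 = n ^ 2 := by
    rw [hm]; omega
  have h16 : 16 * t + 1 ≤ n ^ 2 := by
    have h1 : (16 * t : ℝ) < (n : ℝ) ^ 2 := by linarith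
    have h2 : (16 * t : ℕ) < n ^ 2 := by exact_mod_cast h1
    omega
  have hm3 : 3 ≤ m := by omega
  have hn5 : 5 ≤ n := by
    by_contra h
    have h1 : n ≤ 4 := by omega
    have : n ^ 2 ≤ 4 ^ 2 := Nat.pow_le_pow_left h1 2
    omega
  -- every new edge is a "bad pair"
  set badP : Fin n × Fin n → Prop :=
    fun p => p.1 ≠ p.2 ∧ ¬ G.Adj p.1 p.2 ∧ ∀ w, ¬(G.Adj p.1 w ∧ G.Adj p.2 w) with hbadP
  have key : ∀ a b : Fin n, G'.Adj a b → s(a, b) ∉ G.edgeSet → badP (a, b) := by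
    intro a b hab h2
    refine ⟨hab.ne, fun h => h2 (G.mem_edgeSet.mpr h), ?_⟩
    rintro w ⟨haw, hbw⟩
    exact hcon ⟨a, b, w, hab, hsub hbw, hsub haw,
      Or.inl ⟨h2, G.mem_edgeSet.mpr hbw, G.mem_edgeSet.mpr haw⟩⟩
  set A4 : Finset (Fin n × Fin n) := univ.filter badP with hA4
  -- injection : Bool × F ↪ A4
  have hbadout : ∀ e : {e : G'.edgeSet // (e : Sym2 (Fin n)) ∉ G.edgeSet},
      badP (e.1.1).out := by
    intro e
    have hq : s((e.1.1).out.1, (e.1.1).out.2) = e.1.1 := (e.1.1).out_eq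
    have h1 : G'.Adj (e.1.1).out.1 (e.1.1).out.2 := by
      rw [← SimpleGraph.mem_edgeSet]
      show s((e.1.1).out.1, (e.1.1).out.2) ∈ _
      rw [hq]; exact e.1.2
    have h2 : s((e.1.1).out.1, (e.1.1).out.2) ∉ G.edgeSet := by
      show s((e.1.1).out.1, (e.1.1).out.2) ∉ _
      rw [hq]; exact e.2
    exact key _ _ h1 h2
  have hbswap : ∀ p : Fin n × Fin n, badP p → badP p.swap := by
    rintro p ⟨h1, h2, h3⟩
    exact ⟨h1.symm, fun h => h2 h.symm, fun w hw => h3 w ⟨hw.2, hw.1⟩⟩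
  have hBo : 10 * t ≤ A4.card := by
    set T := {e : G'.edgeSet // (e : Sym2 (Fin n)) ∉ G.edgeSet} with hT
    have hmemA4 : ∀ p : Fin n × Fin n, badP p → p ∈ A4 := by
      intro p hp; rw [hA4]; exact Finset.mem_filter.mpr ⟨Finset.mem_univ _, hp⟩
    set f : Bool × T → {p : Fin n × Fin n // p ∈ A4} := fun be =>
      if be.1 then ⟨(be.2.1.1).out, hmemA4 _ (hbadout be.2)⟩
      else ⟨(be.2.1.1).out.swap, hmemA4 _ (hbswap _ (hbadout be.2))⟩ with hf
    have hout_inj : ∀ u v : T, (u.1.1).out = (v.1.1).out → u = v := by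
      intro u v h
      have : (u.1 : Sym2 (Fin n)) = v.1.1 := by
        rw [← (u.1.1).out_eq, ← (v.1.1).out_eq, h]
      exact Subtype.ext (Subtype.ext this)
    have hswapcase : ∀ u v : T, (u.1.1).out = (v.1.1).out.swap → False := by
      intro u v h
      have h1 : (u.1 : Sym2 (Fin n)) = v.1.1 := by
        rw [← (u.1.1).out_eq, ← (v.1.1).out_eq, h]
        exact Sym2.eq_swap
      rw [h1] at h
      exact (hbadout v).1 (congrArg Prod.fst h)
    have hfinj : Function.Injective f := by
      rintro ⟨b1, u⟩ ⟨b2, v⟩ huv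
      rw [hf] at huv
      cases b1 <;> cases b2 <;>
        simp only [if_true, if_false, Bool.false_eq_true, Subtype.mk.injEq] at huv
      · have h2 : (u.1.1).out = (v.1.1).out := by
          have := congrArg Prod.swap huv
          simpa using this
        rw [hout_inj u v h2]
      · exact (hswapcase v u huv.symm).elim
      · exact (hswapcase u v huv).elim
      · rw [hout_inj u v huv]
    have hle : Nat.card (Bool × T) ≤ Nat.card {p : Fin n × Fin n // p ∈ A4} :=
      Nat.card_le_card_of_injective f hfinj
    rw [Nat.card_prod] at hle
    have hBool : Nat.card Bool = 2 := by simp [Nat.card_eq_fintype_card]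
    rw [hBool] at hle
    have hA4c : Nat.card {p : Fin n × Fin n // p ∈ A4} = A4.card := Nat.card_eq_finsetCard A4
    rw [hA4c] at hle
    calc 10 * t = 2 * (5 * t) := by ring
    _ ≤ 2 * Nat.card T := by omega
    _ ≤ A4.card := hle
  -- degree sums
  set S : ℕ := ∑ v, d v * d v with hS
  have hsumdeg : ∑ v, d v = 2 * m := G.sum_degrees_eq_twice_card_edges
  set Ω : Finset (Fin n × Fin n) := univ.filter (fun p => G.Adj p.1 p.2) with hΩ
  have hdeg : ∀ x : Fin n, (univ.filter (fun w => G.Adj x w)).card = d x := by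
    intro x; rw [← neighborFinset_eq_filter]; rfl
  have hΩcard : Ω.card = 2 * m := by
    rw [hΩ, Finset.card_filter, Fintype.sum_prod_type, ← hsumdeg]
    refine Finset.sum_congr rfl fun x _ => ?_
    rw [← hdeg x, Finset.card_filter]
  have hsum1 : ∑ p ∈ Ω, (d p.1 + d p.2) = 2 * S := by
    rw [hΩ, Finset.sum_filter, Fintype.sum_prod_type]
    have h1 : ∀ x : Fin n, ∑ w : Fin n, (if G.Adj x w then (d x + d w) else 0)
        = d x * d x + ∑ w : Fin n, (if G.Adj x w then d w else 0) := by
      intro x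
      rw [← Finset.sum_filter, ← Finset.sum_filter]
      rw [Finset.sum_add_distrib, Finset.sum_const, smul_eq_mul, hdeg x]
    rw [Finset.sum_congr rfl fun x _ => h1 x]
    rw [Finset.sum_add_distrib, hS, two_mul]
    congr 1
    rw [Finset.sum_comm]
    refine Finset.sum_congr rfl fun w _ => ?_
    calc ∑ x : Fin n, (if G.Adj x w then d w else 0)
        = ∑ x : Fin n, (if G.Adj w x then d w else 0) :=
          Finset.sum_congr rfl fun x _ => if_congr (G.adj_comm x w) rfl rfl
    _ = d w * d w := by
        rw [← Finset.sum_filter, Finset.sum_const, smul_eq_mul, hdeg w, mul_comm]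
  have hCS : (2 * m) ^ 2 ≤ n * S := by
    have h := Finset.sum_mul_sq_le_sq_mul_sq Finset.univ d (fun _ => 1)
    simp only [mul_one, one_pow, Finset.sum_const, Finset.card_univ, Fintype.card_fin,
      smul_eq_mul, mul_one] at h
    calc (2 * m) ^ 2 = (∑ v, d v) ^ 2 := by rw [hsumdeg]
    _ ≤ (∑ v, d v ^ 2) * n := h
    _ = n * S := by
        rw [hS, mul_comm]; congr 1; exact Finset.sum_congr rfl fun v _ => by ring
  have hΩne : Ω.Nonempty := by
    rw [← Finset.card_pos, hΩcard]; omega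
  obtain ⟨p0, hp0, hp0max⟩ := Finset.exists_max_image Ω (fun p => d p.1 + d p.2) hΩne
  set x := p0.1
  set y := p0.2
  have hadjxy : G.Adj x y := (Finset.mem_filter.mp hp0).2
  set a : ℕ := d x with ha
  set b : ℕ := d y with hb
  have hmaxsum : 2 * S ≤ 2 * m * (a + b) := by
    calc 2 * S = ∑ p ∈ Ω, (d p.1 + d p.2) := hsum1.symm
    _ ≤ ∑ _p ∈ Ω, (a + b) := Finset.sum_le_sum hp0max
    _ = Ω.card * (a + b) := by rw [Finset.sum_const, smul_eq_mul]
    _ = 2 * m * (a + b) := by rw [hΩcard]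
  have h4m : 4 * m ≤ n * (a + b) := by
    have h1 : (2 * m) * (4 * m) ≤ (2 * m) * (n * (a + b)) := by
      calc (2 * m) * (4 * m) = 2 * ((2 * m) ^ 2) := by ring
      _ ≤ 2 * (n * S) := Nat.mul_le_mul_left 2 hCS
      _ = n * (2 * S) := by ring
      _ ≤ n * (2 * m * (a + b)) := Nat.mul_le_mul_left n hmaxsum
      _ = (2 * m) * (n * (a + b)) := by ring
    exact Nat.le_of_mul_le_mul_left h1 (by omega)
  -- the four disjoint families of ordered pairs
  set U0 : Finset (Fin n × Fin n) := (univ : Finset (Fin n)).offDiag with hU0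
  set A2 : Finset (Fin n × Fin n) := (G.neighborFinset x).offDiag with hA2
  set A3 : Finset (Fin n × Fin n) := (G.neighborFinset y).offDiag with hA3
  have hsubU : Ω ∪ A2 ∪ A3 ∪ A4 ⊆ U0 := by
    intro p hp
    rw [hU0, Finset.mem_offDiag]
    refine ⟨Finset.mem_univ _, Finset.mem_univ _, ?_⟩
    simp only [Finset.mem_union] at hp
    rcases hp with ((h | h) | h) | h
    · exact ((Finset.mem_filter.mp h).2).ne
    · exact (Finset.mem_offDiag.mp h).2.2
    · exact (Finset.mem_offDiag.mp h).2.2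
    · exact ((Finset.mem_filter.mp h).2).1
  have d12 : Disjoint Ω A2 := by
    rw [Finset.disjoint_left]
    intro p hp hp2
    have h1 := (Finset.mem_filter.mp hp).2
    obtain ⟨hx1, hx2, -⟩ := Finset.mem_offDiag.mp hp2
    exact tri x p.1 p.2 ((SimpleGraph.mem_neighborFinset _ _ _).mp hx1) ((SimpleGraph.mem_neighborFinset _ _ _).mp hx2) h1
  have d13 : Disjoint Ω A3 := by
    rw [Finset.disjoint_left]
    intro p hp hp2
    have h1 := (Finset.mem_filter.mp hp).2
    obtain ⟨hx1, hx2, -⟩ := Finset.mem_offDiag.mp hp2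
    exact tri y p.1 p.2 ((SimpleGraph.mem_neighborFinset _ _ _).mp hx1) ((SimpleGraph.mem_neighborFinset _ _ _).mp hx2) h1
  have d14 : Disjoint Ω A4 := by
    rw [Finset.disjoint_left]
    intro p hp hp4
    exact ((Finset.mem_filter.mp hp4).2).2.1 (Finset.mem_filter.mp hp).2
  have d23 : Disjoint A2 A3 := by
    rw [Finset.disjoint_left]
    intro p hp2 hp3
    obtain ⟨hx1, -, -⟩ := Finset.mem_offDiag.mp hp2
    obtain ⟨hy1, -, -⟩ := Finset.mem_offDiag.mp hp3
    exact tri x y p.1 hadjxy ((SimpleGraph.mem_neighborFinset _ _ _).mp hx1) ((SimpleGraph.mem_neighborFinset _ _ _).mp hy1)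
  have d24 : Disjoint A2 A4 := by
    rw [Finset.disjoint_left]
    intro p hp2 hp4
    obtain ⟨hx1, hx2, -⟩ := Finset.mem_offDiag.mp hp2
    exact ((Finset.mem_filter.mp hp4).2).2.2 x
      ⟨((SimpleGraph.mem_neighborFinset _ _ _).mp hx1).symm, ((SimpleGraph.mem_neighborFinset _ _ _).mp hx2).symm⟩
  have d34 : Disjoint A3 A4 := by
    rw [Finset.disjoint_left]
    intro p hp3 hp4
    obtain ⟨hy1, hy2, -⟩ := Finset.mem_offDiag.mp hp3
    exact ((Finset.mem_filter.mp hp4).2).2.2 y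
      ⟨((SimpleGraph.mem_neighborFinset _ _ _).mp hy1).symm, ((SimpleGraph.mem_neighborFinset _ _ _).mp hy2).symm⟩
  have hU0card : U0.card = n * n - n := by
    rw [hU0, Finset.offDiag_card, Finset.card_univ, Fintype.card_fin]
  have hcount : 2 * m + A2.card + A3.card + A4.card ≤ n * n - n := by
    have hdisj1 : Disjoint (Ω ∪ A2) A3 := Finset.disjoint_union_left.mpr ⟨d13, d23⟩
    have hdisj2 : Disjoint (Ω ∪ A2 ∪ A3) A4 :=
      Finset.disjoint_union_left.mpr ⟨Finset.disjoint_union_left.mpr ⟨d14, d24⟩, d34⟩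
    calc 2 * m + A2.card + A3.card + A4.card
        = (Ω ∪ A2 ∪ A3 ∪ A4).card := by
          rw [Finset.card_union_of_disjoint hdisj2, Finset.card_union_of_disjoint hdisj1,
            Finset.card_union_of_disjoint d12, hΩcard]
    _ ≤ U0.card := Finset.card_le_card hsubU
    _ = n * n - n := hU0card
  have hA2card : A2.card = a * a - a := by
    rw [hA2, Finset.offDiag_card]; rfl
  have hA3card : A3.card = b * b - b := by
    rw [hA3, Finset.offDiag_card]; rfl
  -- final arithmetic over ℤ
  have haa : a ≤ a * a := Nat.le_mul_of_pos_left a (Nat.pos_of_ne_zero (by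
    intro h0
    exact absurd (ha ▸ h0) (by
      have := hadjxy
      have : 0 < d x := G.degree_pos_iff_exists_adj x |>.mpr ⟨y, this⟩
      omega)))
  have hbb : b ≤ b * b := Nat.le_mul_of_pos_left b (Nat.pos_of_ne_zero (by
    intro h0
    exact absurd (hb ▸ h0) (by
      have := hadjxy.symm
      have : 0 < d y := G.degree_pos_iff_exists_adj y |>.mpr ⟨x, this⟩
      omega)))
  have hncard : n ≤ n * n := Nat.le_mul_of_pos_left n hn
  rw [hA2card, hA3card] at hcount
  -- move to integers
  set r : ℕ := n ^ 2 % 4 with hrdef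
  have hr1 : r ≤ 1 := by omega
  zify [haa, hbb, hncard] at hcount
  have F2 : (10 * t : ℤ) ≤ (A4.card : ℤ) := by exact_mod_cast hBo
  have F3 : (4 * m : ℤ) ≤ (n : ℤ) * (a + b) := by exact_mod_cast h4m
  have F4 : (4 * (m + t) + r : ℤ) = (n : ℤ) ^ 2 := by exact_mod_cast h4
  have F5 : (r : ℤ) ≤ 1 := by exact_mod_cast hr1
  have F6 : (16 * t + 1 : ℤ) ≤ (n : ℤ) ^ 2 := by exact_mod_cast h16
  have F7 : (1 : ℤ) ≤ t := by exact_mod_cast ht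
  have F8 : (5 : ℤ) ≤ n := by exact_mod_cast hn5
  have F9 : (3 : ℤ) ≤ m := by exact_mod_cast hm3
  have Fr : (0 : ℤ) ≤ r := by positivity
  exact stmt4_arith (n : ℤ) (m : ℤ) (t : ℤ) (r : ℤ) (a : ℤ) (b : ℤ) (A4.card : ℤ)
    F2 F3 (by linarith) F5 Fr F6 F7 F8 (by linarith)
end

section
/- Let n be a positive integer divisible by 4 and let T₄(n) be the complete 4-partite graph with all four parts of size n/4. Then T₄(n) admits at least 27^{n²/4} distinct K₃⁽²⁾-free 27-edge-colorings. -/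
open SimpleGraph

/-- An `r`-edge-coloring of `G` is `K₃⁽²⁾`-free if `G` has no triangle in which exactly two
distinct colors appear. -/
def IsK32Free {V : Type*} (G : SimpleGraph V) {r : ℕ} (c : G.edgeSet → Fin r) : Prop :=
  ∀ (a b d : V) (hab : G.Adj a b) (hbd : G.Adj b d) (had : G.Adj a d),
    ¬ ((c ⟨s(a, b), hab⟩ = c ⟨s(b, d), hbd⟩ ∧ c ⟨s(a, b), hab⟩ ≠ c ⟨s(a, d), had⟩) ∨
       (c ⟨s(a, b), hab⟩ = c ⟨s(a, d), had⟩ ∧ c ⟨s(a, b), hab⟩ ≠ c ⟨s(b, d), hbd⟩) ∨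
       (c ⟨s(b, d), hbd⟩ = c ⟨s(a, d), had⟩ ∧ c ⟨s(b, d), hbd⟩ ≠ c ⟨s(a, b), hab⟩))

namespace Stmt5Aux

abbrev D (m : ℕ) := {p : Fin 4 × Fin 4 // p.1 < p.2} × Fin m × Fin m

/-- Index into `D m` built from natural number data. -/
def idx (m : ℕ) (hm : 0 < m) (a b x y : ℕ) (h : a % 4 < b % 4) : D m :=
  (⟨(⟨a % 4, Nat.mod_lt _ (by norm_num)⟩, ⟨b % 4, Nat.mod_lt _ (by norm_num)⟩),
      by simp only [Fin.mk_lt_mk]; exact h⟩,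
    ⟨x % m, Nat.mod_lt _ hm⟩, ⟨y % m, Nat.mod_lt _ hm⟩)

def enc (m : ℕ) (hm : 0 < m) (g : D m → Fin 9) (a b : ℕ) (h : a % 4 < b % 4) : Fin 27 :=
  ⟨9 * ((a % 4 ^^^ b % 4) - 1) + (g (idx m hm a b (a / 4) (b / 4) h)).val, by
    have hx : a % 4 ^^^ b % 4 < 4 :=
      Nat.xor_lt_two_pow (n := 2) (by omega) (by omega)
    have hg := (g (idx m hm a b (a / 4) (b / 4) h)).isLt
    omega⟩

def col (m : ℕ) (hm : 0 < m) (g : D m → Fin 9) (a b : ℕ) : Fin 27 :=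
  if h : a % 4 < b % 4 then enc m hm g a b h
  else if h' : b % 4 < a % 4 then enc m hm g b a h'
  else 0

lemma col_symm (m : ℕ) (hm : 0 < m) (g : D m → Fin 9) (a b : ℕ) :
    col m hm g a b = col m hm g b a := by
  unfold col
  rcases lt_trichotomy (a % 4) (b % 4) with h | h | h
  · rw [dif_pos h, dif_neg (by omega), dif_pos h]
  · rw [dif_neg (by omega), dif_neg (by omega), dif_neg (by omega), dif_neg (by omega)]
  · rw [dif_neg (by omega), dif_pos h, dif_pos h]

lemma col_spec (m : ℕ) (hm : 0 < m) (g : D m → Fin 9) (a b : ℕ) (h : a % 4 ≠ b % 4) :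
    ∃ v : ℕ, v < 9 ∧ (col m hm g a b).val = 9 * ((a % 4 ^^^ b % 4) - 1) + v := by
  unfold col
  rcases lt_trichotomy (a % 4) (b % 4) with h' | h' | h'
  · rw [dif_pos h']
    exact ⟨_, (g _).isLt, rfl⟩
  · exact absurd h' h
  · rw [dif_neg (by omega), dif_pos h']
    exact ⟨(g (idx m hm b a (b / 4) (a / 4) h')).val, (g _).isLt,
      by rw [Nat.xor_comm ((a : ℕ) % 4)]; rfl⟩

lemma xor_cancel {x y z : ℕ} (h : x ^^^ y = z ^^^ y) : x = z := by
  have := congrArg (· ^^^ y) h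
  simpa [Nat.xor_assoc] using this

lemma col_ne (m : ℕ) (hm : 0 < m) (g : D m → Fin 9) (p q r s : ℕ)
    (hpq : p % 4 ≠ q % 4) (hrs : r % 4 ≠ s % 4)
    (hx : p % 4 ^^^ q % 4 ≠ r % 4 ^^^ s % 4) :
    col m hm g p q ≠ col m hm g r s := by
  obtain ⟨v1, hv1, he1⟩ := col_spec m hm g p q hpq
  obtain ⟨v2, hv2, he2⟩ := col_spec m hm g r s hrs
  intro h
  have hval : (col m hm g p q).val = (col m hm g r s).val := by rw [h]
  have h1 : p % 4 ^^^ q % 4 ≠ 0 := by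
    simpa [Nat.xor_eq_zero_iff] using hpq
  have h2 : r % 4 ^^^ s % 4 ≠ 0 := by
    simpa [Nat.xor_eq_zero_iff] using hrs
  have b1 : p % 4 ^^^ q % 4 < 4 := Nat.xor_lt_two_pow (n := 2) (by omega) (by omega)
  have b2 : r % 4 ^^^ s % 4 < 4 := Nat.xor_lt_two_pow (n := 2) (by omega) (by omega)
  omega

end Stmt5Aux

open Stmt5Aux in
theorem stmt5 (n : ℕ) (hn : 0 < n) (h4 : 4 ∣ n) :
    27 ^ (n ^ 2 / 4) ≤
      Nat.card {c : (turanGraph n 4).edgeSet → Fin 27 // IsK32Free (turanGraph n 4) c} := by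
  obtain ⟨m, rfl⟩ := h4
  have hm : 0 < m := by omega
  -- the coloring associated to g
  set G := turanGraph (4 * m) 4 with hG
  have adj_iff : ∀ a b : Fin (4 * m), G.Adj a b ↔ (a : ℕ) % 4 ≠ (b : ℕ) % 4 := by
    intro a b
    constructor
    · intro h; simpa [hG, turanGraph] using h
    · intro h; simp [hG, turanGraph]; simpa using h
  let C : (D m → Fin 9) → (G.edgeSet → Fin 27) := fun g e =>
    Sym2.lift ⟨fun a b : Fin (4 * m) => col m hm g a b, fun a b => col_symm m hm g a b⟩ e.1
  have hC : ∀ (g : D m → Fin 9) (a b : Fin (4 * m)) (hab : G.Adj a b),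
      C g ⟨s(a, b), hab⟩ = col m hm g a b := fun _ _ _ _ => rfl
  have hfree : ∀ g, IsK32Free G (C g) := by
    intro g a b d hab hbd had
    rw [hC, hC, hC]
    have hab' : (a : ℕ) % 4 ≠ (b : ℕ) % 4 := (adj_iff a b).1 hab
    have hbd' : (b : ℕ) % 4 ≠ (d : ℕ) % 4 := (adj_iff b d).1 hbd
    have had' : (a : ℕ) % 4 ≠ (d : ℕ) % 4 := (adj_iff a d).1 had
    have h1 : col m hm g a b ≠ col m hm g b d := by
      apply col_ne m hm g _ _ _ _ hab' hbd'
      intro h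
      exact had' (xor_cancel (y := (b : ℕ) % 4) (by rw [h, Nat.xor_comm]))
    have h2 : col m hm g a b ≠ col m hm g a d := by
      apply col_ne m hm g _ _ _ _ hab' had'
      intro h
      apply hbd'
      have := congrArg (fun t => (a : ℕ) % 4 ^^^ t) h
      simpa [← Nat.xor_assoc] using this
    have h3 : col m hm g b d ≠ col m hm g a d := by
      apply col_ne m hm g _ _ _ _ hbd' had'
      intro h
      exact hab' (xor_cancel (y := (d : ℕ) % 4) h).symm
    tauto
  let Φ : (D m → Fin 9) → {c : G.edgeSet → Fin 27 // IsK32Free G c} :=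
    fun g => ⟨C g, hfree g⟩
  have hΦinj : Function.Injective Φ := by
    intro g g' h
    have hCg : C g = C g' := congrArg Subtype.val h
    funext p
    obtain ⟨⟨⟨i, j⟩, hij⟩, x, y⟩ := p
    -- the edge realizing this index
    have hi4 := i.isLt
    have hj4 := j.isLt
    have hxm := x.isLt
    have hym := y.isLt
    have hia : (4 * (x : ℕ) + (i : ℕ)) < 4 * m := by omega
    have hib : (4 * (y : ℕ) + (j : ℕ)) < 4 * m := by omega
    let a : Fin (4 * m) := ⟨4 * (x : ℕ) + (i : ℕ), hia⟩
    let b : Fin (4 * m) := ⟨4 * (y : ℕ) + (j : ℕ), hib⟩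
    have hva : (a : ℕ) = 4 * (x : ℕ) + (i : ℕ) := rfl
    have hvb : (b : ℕ) = 4 * (y : ℕ) + (j : ℕ) := rfl
    have hamod : (a : ℕ) % 4 = (i : ℕ) := by rw [hva]; omega
    have hbmod : (b : ℕ) % 4 = (j : ℕ) := by rw [hvb]; omega
    have hadiv : (a : ℕ) / 4 = (x : ℕ) := by rw [hva]; omega
    have hbdiv : (b : ℕ) / 4 = (y : ℕ) := by rw [hvb]; omega
    have hlt : (a : ℕ) % 4 < (b : ℕ) % 4 := by
      rw [hamod, hbmod]; exact hij
    have hadj : G.Adj a b := (adj_iff a b).2 (by omega)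
    have hcol : col m hm g (a : ℕ) (b : ℕ) = col m hm g' (a : ℕ) (b : ℕ) := by
      have := congrFun hCg ⟨s(a, b), hadj⟩
      rwa [hC, hC] at this
    have hidx : idx m hm (a : ℕ) (b : ℕ) ((a : ℕ) / 4) ((b : ℕ) / 4) hlt
        = (⟨(i, j), hij⟩, x, y) := by
      unfold idx
      refine Prod.ext ?_ (Prod.ext ?_ ?_)
      · apply Subtype.ext
        refine Prod.ext ?_ ?_ <;> apply Fin.ext <;> simp [hamod, hbmod]
      · apply Fin.ext
        show (a : ℕ) / 4 % m = (x : ℕ)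
        rw [hadiv]
        exact Nat.mod_eq_of_lt hxm
      · apply Fin.ext
        show (b : ℕ) / 4 % m = (y : ℕ)
        rw [hbdiv]; exact Nat.mod_eq_of_lt hym
    have hval : (col m hm g (a : ℕ) (b : ℕ)).val = (col m hm g' (a : ℕ) (b : ℕ)).val := by
      rw [hcol]
    unfold col at hval
    rw [dif_pos hlt, dif_pos hlt] at hval
    unfold enc at hval
    simp only [hidx] at hval
    have h9 := (g (⟨(i, j), hij⟩, x, y)).isLt
    have h9' := (g' (⟨(i, j), hij⟩, x, y)).isLt
    apply Fin.ext
    omega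
  have hcard : Nat.card (D m → Fin 9)
      ≤ Nat.card {c : G.edgeSet → Fin 27 // IsK32Free G c} :=
    Nat.card_le_card_of_injective Φ hΦinj
  have h6 : Fintype.card {p : Fin 4 × Fin 4 // p.1 < p.2} = 6 := by decide
  have hD : Nat.card (D m) = 6 * (m * m) := by
    simp [Nat.card_prod, Nat.card_eq_fintype_card, h6, mul_assoc]
  have hfun : Nat.card (D m → Fin 9) = 9 ^ (6 * (m * m)) := by
    rw [Nat.card_fun, hD, Nat.card_eq_fintype_card, Fintype.card_fin]
  have hexp : (4 * m) ^ 2 / 4 = 4 * m ^ 2 := by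
    rw [show (4 * m) ^ 2 = 4 * (4 * m ^ 2) by ring, Nat.mul_div_cancel_left _ (by norm_num)]
  have harith : (27 : ℕ) ^ (4 * m ^ 2) = 9 ^ (6 * (m * m)) := by
    rw [show (27 : ℕ) = 3 ^ 3 by norm_num, show (9 : ℕ) = 3 ^ 2 by norm_num,
      ← pow_mul, ← pow_mul]
    ring_nf
  rw [hexp, harith, ← hfun]
  exact hcard
end

section
/- For every integer r ≥ 27 and every integer n ≥ 3, there exists a simple graph G on n vertices whose number of K₃⁽²⁾-free r-edge-colorings is strictly greater than r^⌊n²/4⌋; in particular, the balanced complete bipartite Turán graph T₂(n) is not (r,K₃⁽²⁾)-extremal for r ≥ 27. -/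
open SimpleGraph

/-! ### Counting residues in ranges -/

lemma count_mod4 (n a : ℕ) (ha : a < 4) :
    ((Finset.range n).filter (fun w => w % 4 = a)).card
      = n / 4 + if a < n % 4 then 1 else 0 := by
  induction n with
  | zero => simp
  | succ n ih =>
    rw [Finset.range_add_one, Finset.filter_insert]
    by_cases h : n % 4 = a
    · rw [if_pos h, Finset.card_insert_of_notMem (by simp), ih]
      split_ifs <;> omega
    · rw [if_neg h, ih]
      split_ifs <;> omega

lemma count_mod3 (n a : ℕ) (ha : a < 3) :
    ((Finset.range n).filter (fun w => w % 3 = a)).card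
      = n / 3 + if a < n % 3 then 1 else 0 := by
  induction n with
  | zero => simp
  | succ n ih =>
    rw [Finset.range_add_one, Finset.filter_insert]
    by_cases h : n % 3 = a
    · rw [if_pos h, Finset.card_insert_of_notMem (by simp), ih]
      split_ifs <;> omega
    · rw [if_neg h, ih]
      split_ifs <;> omega

lemma count_mod2 (n a : ℕ) (ha : a < 2) :
    ((Finset.range n).filter (fun w => w % 2 = a)).card
      = n / 2 + if a < n % 2 then 1 else 0 := by
  induction n with
  | zero => simp
  | succ n ih =>
    rw [Finset.range_add_one, Finset.filter_insert]
    by_cases h : n % 2 = a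
    · rw [if_pos h, Finset.card_insert_of_notMem (by simp), ih]
      split_ifs <;> omega
    · rw [if_neg h, ih]
      split_ifs <;> omega

lemma card_fin_filter (n : ℕ) (p : ℕ → Prop) [DecidablePred p] :
    (Finset.univ.filter (fun v : Fin n => p v.val)).card
      = ((Finset.range n).filter p).card := by
  apply Finset.card_bij (fun v _ => v.val)
  · intro a ha
    simp only [Finset.mem_filter, Finset.mem_univ, true_and] at ha
    simp only [Finset.mem_filter, Finset.mem_range]
    exact ⟨a.isLt, ha⟩
  · intro a _ b _ h
    exact Fin.val_injective h
  · intro b hb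
    simp only [Finset.mem_filter, Finset.mem_range] at hb
    exact ⟨⟨b, hb.1⟩, by simp [hb.2], rfl⟩

lemma sum_fin_mod4 (n : ℕ) (g : ℕ → ℕ) :
    ∑ v : Fin n, g (v.val % 4)
      = ∑ a ∈ Finset.range 4,
          ((Finset.range n).filter (fun w => w % 4 = a)).card * g a := by
  rw [Fin.sum_univ_eq_sum_range (fun v => g (v % 4))]
  rw [← Finset.sum_fiberwise_of_maps_to (g := fun w => w % 4) (t := Finset.range 4)
      (fun w _ => Finset.mem_range.2 (Nat.mod_lt _ (by norm_num))) (fun w => g (w % 4))]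
  refine Finset.sum_congr rfl fun a _ => ?_
  rw [Finset.sum_congr rfl (fun w hw => by rw [(Finset.mem_filter.1 hw).2]),
    Finset.sum_const, smul_eq_mul]

lemma sum_fin_mod2 (n : ℕ) (g : ℕ → ℕ) :
    ∑ v : Fin n, g (v.val % 2)
      = ∑ a ∈ Finset.range 2,
          ((Finset.range n).filter (fun w => w % 2 = a)).card * g a := by
  rw [Fin.sum_univ_eq_sum_range (fun v => g (v % 2))]
  rw [← Finset.sum_fiberwise_of_maps_to (g := fun w => w % 2) (t := Finset.range 2)
      (fun w _ => Finset.mem_range.2 (Nat.mod_lt _ (by norm_num))) (fun w => g (w % 2))]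
  refine Finset.sum_congr rfl fun a _ => ?_
  rw [Finset.sum_congr rfl (fun w hw => by rw [(Finset.mem_filter.1 hw).2]),
    Finset.sum_const, smul_eq_mul]

/-! ### The class function on edges of the 4-partite Turán graph -/

def f3 (k : ℕ) : Fin 3 := if k % 4 = 1 then 0 else if k % 4 = 3 then 2 else 1

def cls {n : ℕ} : Sym2 (Fin n) → Fin 3 :=
  Sym2.lift ⟨fun a b => f3 (a.val + b.val), fun a b => by
    show f3 (a.val + b.val) = f3 (b.val + a.val)
    rw [Nat.add_comm]⟩

@[simp] lemma cls_mk {n : ℕ} (a b : Fin n) : cls s(a, b) = f3 (a.val + b.val) := rfl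

lemma f3_mod (x y : ℕ) : f3 (x + y) = f3 (x % 4 + y % 4) := by
  unfold f3
  rw [Nat.add_mod x y 4]

lemma partner_iff : ∀ (a b : Fin 4) (j : Fin 3),
    ((a.val ≠ b.val ∧ f3 (a.val + b.val) = j) ↔ b.val = a.val ^^^ (j.val + 1)) := by decide

lemma tri_classes : ∀ a b d : Fin 4, a.val ≠ b.val → b.val ≠ d.val → a.val ≠ d.val →
    f3 (a.val + b.val) ≠ f3 (b.val + d.val) ∧ f3 (a.val + b.val) ≠ f3 (a.val + d.val) ∧
      f3 (b.val + d.val) ≠ f3 (a.val + d.val) := by decide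

/-! ### The class subgraphs of `turanGraph n 4` -/

def Gc (n : ℕ) (j : Fin 3) : SimpleGraph (Fin n) where
  Adj v w := v.val % 4 ≠ w.val % 4 ∧ f3 (v.val + w.val) = j
  symm := ⟨fun v w h => ⟨Ne.symm h.1, by rw [Nat.add_comm]; exact h.2⟩⟩
  loopless := ⟨fun v h => h.1 rfl⟩

instance GcDecidable (n : ℕ) (j : Fin 3) : DecidableRel (Gc n j).Adj :=
  fun _ _ => instDecidableAnd

lemma Gc_degree (n : ℕ) (j : Fin 3) (v : Fin n) :
    (Gc n j).degree v
      = ((Finset.range n).filter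
          (fun w => w % 4 = v.val % 4 ^^^ (j.val + 1))).card := by
  unfold SimpleGraph.degree
  rw [SimpleGraph.neighborFinset_eq_filter]
  rw [show (Finset.univ.filter (fun w => (Gc n j).Adj v w))
      = Finset.univ.filter (fun w : Fin n =>
          (fun x => v.val % 4 ≠ x % 4 ∧ f3 (v.val + x) = j) w.val) from rfl]
  rw [card_fin_filter n (fun x => v.val % 4 ≠ x % 4 ∧ f3 (v.val + x) = j)]
  congr 1
  apply Finset.filter_congr
  intro x _
  have h4v : v.val % 4 < 4 := Nat.mod_lt _ (by norm_num)
  have h4x : x % 4 < 4 := Nat.mod_lt _ (by norm_num)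
  have key := partner_iff ⟨v.val % 4, h4v⟩ ⟨x % 4, h4x⟩ j
  constructor
  · intro hh
    exact key.1 ⟨hh.1, by rw [← f3_mod]; exact hh.2⟩
  · intro hh
    obtain ⟨h1, h2⟩ := key.2 hh
    exact ⟨h1, by rw [f3_mod]; exact h2⟩

lemma Gc_two_card (n : ℕ) (j : Fin 3) :
    2 * (Gc n j).edgeFinset.card
      = ∑ a ∈ Finset.range 4,
          ((Finset.range n).filter (fun w => w % 4 = a)).card *
            ((Finset.range n).filter (fun w => w % 4 = a ^^^ (j.val + 1))).card := by
  rw [← SimpleGraph.sum_degrees_eq_twice_card_edges]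
  rw [show ∑ v : Fin n, (Gc n j).degree v
      = ∑ v : Fin n, (fun a => ((Finset.range n).filter
          (fun w => w % 4 = a ^^^ (j.val + 1))).card) (v.val % 4) from
    Finset.sum_congr rfl fun v _ => Gc_degree n j v]
  exact sum_fin_mod4 n
    (fun a => ((Finset.range n).filter (fun w => w % 4 = a ^^^ (j.val + 1))).card)

lemma Gc_card (n : ℕ) (j : Fin 3) :
    (Gc n j).edgeFinset.card
      = n ^ 2 / 8 + (if j.val = 0 ∧ n % 4 = 2 then 1 else 0) := by
  obtain ⟨m, t, ht, rfl⟩ : ∃ m t, t < 4 ∧ n = 4 * m + t :=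
    ⟨n / 4, n % 4, by omega, by omega⟩
  obtain ⟨jv, hjv⟩ := j
  have h := Gc_two_card (4 * m + t) ⟨jv, hjv⟩
  rw [Finset.sum_range_succ, Finset.sum_range_succ, Finset.sum_range_succ,
    Finset.sum_range_succ, Finset.sum_range_zero] at h
  obtain ⟨E, hE⟩ : ∃ E, (Gc (4 * m + t) ⟨jv, hjv⟩).edgeFinset.card = E := ⟨_, rfl⟩
  rw [hE] at h ⊢
  have hd : (4 * m + t) / 4 = m := by omega
  have hm4 : (4 * m + t) % 4 = t := by omega
  have k1 : (m + 1) * (m + 1) = m * m + 2 * m + 1 := by ring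
  have k2 : (m + 1) * m = m * m + m := by ring
  have k3 : m * (m + 1) = m * m + m := by ring
  have hsq : (4 * m + t) ^ 2 = 16 * (m * m) + 8 * (m * t) + t * t := by ring
  simp only [show ∀ (hh : jv < 3), ((⟨jv, hh⟩ : Fin 3) : ℕ) = jv from fun _ => rfl] at h ⊢
  interval_cases jv <;> interval_cases t <;>
  · simp only [
      show (0:ℕ) + 1 = 1 from rfl, show (1:ℕ) + 1 = 2 from rfl, show (2:ℕ) + 1 = 3 from rfl,
      show (0:ℕ) ^^^ 1 = 1 by decide, show (1:ℕ) ^^^ 1 = 0 by decide,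
      show (2:ℕ) ^^^ 1 = 3 by decide, show (3:ℕ) ^^^ 1 = 2 by decide,
      show (0:ℕ) ^^^ 2 = 2 by decide, show (1:ℕ) ^^^ 2 = 3 by decide,
      show (2:ℕ) ^^^ 2 = 0 by decide, show (3:ℕ) ^^^ 2 = 1 by decide,
      show (0:ℕ) ^^^ 3 = 3 by decide, show (1:ℕ) ^^^ 3 = 2 by decide,
      show (2:ℕ) ^^^ 3 = 1 by decide, show (3:ℕ) ^^^ 3 = 0 by decide] at h
    rw [count_mod4 _ 0 (by norm_num), count_mod4 _ 1 (by norm_num),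
      count_mod4 _ 2 (by norm_num), count_mod4 _ 3 (by norm_num), hd, hm4] at h
    simp only [show (if (0:ℕ) < 0 then (1:ℕ) else 0) = 0 by norm_num,
      show (if (1:ℕ) < 0 then (1:ℕ) else 0) = 0 by norm_num,
      show (if (2:ℕ) < 0 then (1:ℕ) else 0) = 0 by norm_num,
      show (if (3:ℕ) < 0 then (1:ℕ) else 0) = 0 by norm_num,
      show (if (0:ℕ) < 1 then (1:ℕ) else 0) = 1 by norm_num,
      show (if (1:ℕ) < 1 then (1:ℕ) else 0) = 0 by norm_num,
      show (if (2:ℕ) < 1 then (1:ℕ) else 0) = 0 by norm_num,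
      show (if (3:ℕ) < 1 then (1:ℕ) else 0) = 0 by norm_num,
      show (if (0:ℕ) < 2 then (1:ℕ) else 0) = 1 by norm_num,
      show (if (1:ℕ) < 2 then (1:ℕ) else 0) = 1 by norm_num,
      show (if (2:ℕ) < 2 then (1:ℕ) else 0) = 0 by norm_num,
      show (if (3:ℕ) < 2 then (1:ℕ) else 0) = 0 by norm_num,
      show (if (0:ℕ) < 3 then (1:ℕ) else 0) = 1 by norm_num,
      show (if (1:ℕ) < 3 then (1:ℕ) else 0) = 1 by norm_num,
      show (if (2:ℕ) < 3 then (1:ℕ) else 0) = 1 by norm_num,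
      show (if (3:ℕ) < 3 then (1:ℕ) else 0) = 0 by norm_num,
      Nat.add_zero, Nat.zero_add] at h
    try simp only [k1, k2, k3] at h
    rw [hsq, hm4]
    generalize m * m = u at h ⊢
    norm_num
    omega

lemma div_48 (n : ℕ) :
    n ^ 2 / 4 = 2 * (n ^ 2 / 8) + (if n % 4 = 2 then 1 else 0) := by
  obtain ⟨m, t, ht, rfl⟩ : ∃ m t, t < 4 ∧ n = 4 * m + t :=
    ⟨n / 4, n % 4, by omega, by omega⟩
  have hm4 : (4 * m + t) % 4 = t := by omega
  have hsq : (4 * m + t) ^ 2 = 16 * (m * m) + 8 * (m * t) + t * t := by ring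
  rw [hsq, hm4]
  interval_cases t <;>
  · generalize m * m = u
    norm_num
    omega

lemma mod2_iff : ∀ a b : Fin 2, (a.val ≠ b.val ↔ b.val = 1 - a.val) := by decide

lemma T2_degree (n : ℕ) (v : Fin n) :
    (turanGraph n 2).degree v
      = ((Finset.range n).filter (fun w => w % 2 = 1 - v.val % 2)).card := by
  unfold SimpleGraph.degree
  rw [SimpleGraph.neighborFinset_eq_filter]
  rw [show (Finset.univ.filter (fun w => (turanGraph n 2).Adj v w))
      = Finset.univ.filter (fun w : Fin n =>
          (fun x => v.val % 2 ≠ x % 2) w.val) from rfl]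
  rw [card_fin_filter n (fun x => v.val % 2 ≠ x % 2)]
  congr 1
  apply Finset.filter_congr
  intro x _
  have h2v : v.val % 2 < 2 := Nat.mod_lt _ (by norm_num)
  have h2x : x % 2 < 2 := Nat.mod_lt _ (by norm_num)
  exact mod2_iff ⟨v.val % 2, h2v⟩ ⟨x % 2, h2x⟩

lemma T2_edge_bound (n : ℕ) : (turanGraph n 2).edgeFinset.card ≤ n ^ 2 / 4 := by
  have h2 : 2 * (turanGraph n 2).edgeFinset.card
      = ∑ a ∈ Finset.range 2, ((Finset.range n).filter (fun w => w % 2 = a)).card *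
          ((Finset.range n).filter (fun w => w % 2 = 1 - a)).card := by
    rw [← SimpleGraph.sum_degrees_eq_twice_card_edges]
    rw [show ∑ v : Fin n, (turanGraph n 2).degree v
        = ∑ v : Fin n, (fun a => ((Finset.range n).filter
            (fun w => w % 2 = 1 - a)).card) (v.val % 2) from
      Finset.sum_congr rfl fun v _ => T2_degree n v]
    exact sum_fin_mod2 n (fun a => ((Finset.range n).filter (fun w => w % 2 = 1 - a)).card)
  obtain ⟨E, hE⟩ : ∃ E, (turanGraph n 2).edgeFinset.card = E := ⟨_, rfl⟩
  rw [hE] at h2 ⊢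
  rw [Finset.sum_range_succ, Finset.sum_range_succ, Finset.sum_range_zero] at h2
  norm_num at h2
  rw [count_mod2 _ 0 (by norm_num), count_mod2 _ 1 (by norm_num)] at h2
  obtain ⟨m, t, ht, rfl⟩ : ∃ m t, t < 2 ∧ n = 2 * m + t :=
    ⟨n / 2, n % 2, by omega, by omega⟩
  have hd : (2 * m + t) / 2 = m := by omega
  have hm2 : (2 * m + t) % 2 = t := by omega
  rw [hd, hm2] at h2
  have hsq : (2 * m + t) ^ 2 = 4 * (m * m) + 4 * (m * t) + t * t := by ring
  rw [hsq]
  have k1 : (m + 1) * (m + 1) = m * m + 2 * m + 1 := by ring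
  have k2 : (m + 1) * m = m * m + m := by ring
  have k3 : m * (m + 1) = m * m + m := by ring
  interval_cases t <;>
  · norm_num at h2
    try simp only [k1, k2, k3] at h2
    generalize m * m = u at h2 ⊢
    norm_num
    omega

/-! ### Palette cardinalities -/

lemma Q_card (r : ℕ) (j : ℕ) (hj : j < 3) :
    Nat.card {x : Fin r // x.val % 3 = j}
      = r / 3 + if j < r % 3 then 1 else 0 := by
  rw [Nat.card_eq_fintype_card, Fintype.card_subtype]
  rw [show (Finset.univ.filter (fun x : Fin r => x.val % 3 = j))
      = Finset.univ.filter (fun x : Fin r => (fun y => y % 3 = j) x.val) from rfl]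
  rw [card_fin_filter r (fun y => y % 3 = j), count_mod3 r j hj]

/-! ### Rainbow-palette colorings of `turanGraph n 4` are valid -/

lemma rainbow_valid (n r : ℕ) (π : Fin 3 → Fin 3) (hπ : Function.Injective π)
    (c : (turanGraph n 4).edgeSet → Fin r)
    (hc : ∀ e : (turanGraph n 4).edgeSet, (c e).val % 3 = (π (cls e.val)).val) :
    IsK32Free (turanGraph n 4) c := by
  intro a b d hab hbd had
  have rab : a.val % 4 ≠ b.val % 4 := hab
  have rbd : b.val % 4 ≠ d.val % 4 := hbd
  have rad : a.val % 4 ≠ d.val % 4 := had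
  have h4 : ∀ x : Fin n, x.val % 4 < 4 := fun x => Nat.mod_lt _ (by norm_num)
  have key := tri_classes ⟨a.val % 4, h4 a⟩ ⟨b.val % 4, h4 b⟩ ⟨d.val % 4, h4 d⟩ rab rbd rad
  have cab : cls s(a, b) = f3 (a.val % 4 + b.val % 4) := by rw [cls_mk, f3_mod]
  have cbd : cls s(b, d) = f3 (b.val % 4 + d.val % 4) := by rw [cls_mk, f3_mod]
  have cad : cls s(a, d) = f3 (a.val % 4 + d.val % 4) := by rw [cls_mk, f3_mod]
  have gen : ∀ (e1 e2 : (turanGraph n 4).edgeSet),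
      cls e1.val ≠ cls e2.val → c e1 ≠ c e2 := by
    intro e1 e2 hne hEq
    have h1 := hc e1
    have h2 := hc e2
    rw [hEq, h2] at h1
    exact hne (hπ (Fin.val_injective h1.symm))
  have ne1 : c ⟨s(a, b), hab⟩ ≠ c ⟨s(b, d), hbd⟩ := by
    refine gen _ _ ?_
    show cls s(a, b) ≠ cls s(b, d)
    rw [cab, cbd]; exact key.1
  have ne2 : c ⟨s(a, b), hab⟩ ≠ c ⟨s(a, d), had⟩ := by
    refine gen _ _ ?_
    show cls s(a, b) ≠ cls s(a, d)
    rw [cab, cad]; exact key.2.1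
  have ne3 : c ⟨s(b, d), hbd⟩ ≠ c ⟨s(a, d), had⟩ := by
    refine gen _ _ ?_
    show cls s(b, d) ≠ cls s(a, d)
    rw [cbd, cad]; exact key.2.2
  rintro (⟨h, _⟩ | ⟨h, _⟩ | ⟨h, _⟩)
  exacts [ne1 h, ne2 h, ne3 h]

lemma exists_edge (n : ℕ) (hn : 3 ≤ n) (j : Fin 3) :
    ∃ e : (turanGraph n 4).edgeSet, cls e.val = j := by
  have h0 : (0 : ℕ) < n := by omega
  have h1 : (1 : ℕ) < n := by omega
  have h2 : (2 : ℕ) < n := by omega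
  obtain ⟨jv, hjv⟩ := j
  interval_cases jv
  · exact ⟨⟨s((⟨0, h0⟩ : Fin n), (⟨1, h1⟩ : Fin n)),
      by rw [SimpleGraph.mem_edgeSet]; show (0:ℕ) % 4 ≠ 1 % 4; norm_num⟩, Fin.ext rfl⟩
  · exact ⟨⟨s((⟨0, h0⟩ : Fin n), (⟨2, h2⟩ : Fin n)),
      by rw [SimpleGraph.mem_edgeSet]; show (0:ℕ) % 4 ≠ 2 % 4; norm_num⟩, Fin.ext rfl⟩
  · exact ⟨⟨s((⟨1, h1⟩ : Fin n), (⟨2, h2⟩ : Fin n)),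
      by rw [SimpleGraph.mem_edgeSet]; show (1:ℕ) % 4 ≠ 2 % 4; norm_num⟩, Fin.ext rfl⟩

/-! ### Cardinality of a palette family -/

lemma E_eq (n : ℕ) (j : Fin 3) :
    (Finset.univ.filter (fun e : (turanGraph n 4).edgeSet => cls e.val = j)).card
      = (Gc n j).edgeFinset.card := by
  rw [SimpleGraph.edgeFinset_card]
  rw [show (Finset.univ.filter (fun e : (turanGraph n 4).edgeSet => cls e.val = j)).card
      = Fintype.card {e : (turanGraph n 4).edgeSet // cls e.val = j} from
    (Fintype.card_subtype _).symm]
  refine Fintype.card_congr ?_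
  refine (Equiv.subtypeSubtypeEquivSubtypeInter
    (fun e : Sym2 (Fin n) => e ∈ (turanGraph n 4).edgeSet) (fun e => cls e = j)).trans ?_
  refine Equiv.subtypeEquivRight ?_
  intro e
  induction e using Sym2.ind with
  | _ v w =>
    rw [SimpleGraph.mem_edgeSet, SimpleGraph.mem_edgeSet]
    show ((turanGraph n 4).Adj v w ∧ cls s(v, w) = j) ↔ (Gc n j).Adj v w
    rw [cls_mk]
    exact Iff.rfl

lemma palette_card (n r : ℕ) (π : Fin 3 → Fin 3) :
    Nat.card {c : (turanGraph n 4).edgeSet → Fin r //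
        ∀ e : (turanGraph n 4).edgeSet, (c e).val % 3 = (π (cls e.val)).val}
      = ∏ j : Fin 3, (Nat.card {x : Fin r // x.val % 3 = (π j).val}) ^
          ((Gc n j).edgeFinset.card) := by
  rw [Nat.card_congr (Equiv.subtypePiEquivPi
    (p := fun (e : (turanGraph n 4).edgeSet) (x : Fin r) =>
      x.val % 3 = (π (cls e.val)).val))]
  rw [Nat.card_pi]
  rw [← Finset.prod_fiberwise' Finset.univ (fun e : (turanGraph n 4).edgeSet => cls e.val)
      (fun j => Nat.card {x : Fin r // x.val % 3 = (π j).val})]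
  refine Finset.prod_congr rfl fun j _ => ?_
  rw [Finset.prod_const, E_eq]

def pi4 : Fin 4 → Fin 3 → Fin 3 := ![![0, 1, 2], ![1, 2, 0], ![2, 0, 1], ![0, 2, 1]]

lemma pi4_inj : ∀ i, Function.Injective (pi4 i) := by decide

lemma pi4_ne : ∀ i i' : Fin 4, i ≠ i' → ∃ j, pi4 i j ≠ pi4 i' j := by decide

lemma nat_card_sigma {ι : Type} [Fintype ι] (A : ι → Type) [∀ i, Fintype (A i)] :
    Nat.card ((i : ι) × A i) = ∑ i, Nat.card (A i) := by
  simp [Nat.card_eq_fintype_card]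

/-! ### Final arithmetic -/

lemma Q_facts (r : ℕ) (hr : 27 ≤ r) :
    ((r / 3 + if 0 < r % 3 then 1 else 0) + (r / 3 + if 1 < r % 3 then 1 else 0)
        + (r / 3 + if 2 < r % 3 then 1 else 0) = r)
      ∧ (r ^ 2 ≤ (r / 3 + if 0 < r % 3 then 1 else 0) * (r / 3 + if 1 < r % 3 then 1 else 0)
          * (r / 3 + if 2 < r % 3 then 1 else 0)) := by
  obtain ⟨s, ρ, hρ, rfl⟩ : ∃ s ρ, ρ < 3 ∧ r = 3 * s + ρ :=
    ⟨r / 3, r % 3, by omega, by omega⟩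
  have hd : (3 * s + ρ) / 3 = s := by omega
  have hm : (3 * s + ρ) % 3 = ρ := by omega
  rw [hd, hm]
  have hs : 9 ≤ s := by omega
  have H1 : 9 * (s * s) ≤ s * (s * s) := Nat.mul_le_mul_right (s * s) hs
  have H2 : 9 * s ≤ s * s := Nat.mul_le_mul_right s hs
  interval_cases ρ <;>
    simp only [show (if (0:ℕ) < 0 then (1:ℕ) else 0) = 0 by norm_num,
      show (if (1:ℕ) < 0 then (1:ℕ) else 0) = 0 by norm_num,
      show (if (2:ℕ) < 0 then (1:ℕ) else 0) = 0 by norm_num,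
      show (if (0:ℕ) < 1 then (1:ℕ) else 0) = 1 by norm_num,
      show (if (1:ℕ) < 1 then (1:ℕ) else 0) = 0 by norm_num,
      show (if (2:ℕ) < 1 then (1:ℕ) else 0) = 0 by norm_num,
      show (if (0:ℕ) < 2 then (1:ℕ) else 0) = 1 by norm_num,
      show (if (1:ℕ) < 2 then (1:ℕ) else 0) = 1 by norm_num,
      show (if (2:ℕ) < 2 then (1:ℕ) else 0) = 0 by norm_num,
      Nat.add_zero]
  · refine ⟨by omega, ?_⟩
    calc (3 * s + 0) ^ 2 = 9 * (s * s) := by ring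
    _ ≤ s * (s * s) := H1
    _ = s * s * s := by ring
  · refine ⟨by omega, ?_⟩
    calc (3 * s + 1) ^ 2 = 9 * (s * s) + 6 * s + 1 := by ring
    _ ≤ s * (s * s) + s * s := by linarith
    _ = (s + 1) * s * s := by ring
  · refine ⟨by omega, ?_⟩
    calc (3 * s + 2) ^ 2 = 9 * (s * s) + 12 * s + 4 := by ring
    _ ≤ s * (s * s) + 2 * (s * s) + s := by linarith
    _ = (s + 1) * (s + 1) * s := by ring

lemma final_arith (r e b Q0 Q1 Q2 : ℕ) (hb : b ≤ 1) (hQsum : Q0 + Q1 + Q2 = r)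
    (hQprod : r ^ 2 ≤ Q0 * Q1 * Q2) (hQ0 : 1 ≤ Q0) (hr : 1 ≤ r) :
    r ^ (2 * e + b)
      < Q0 ^ (e + b) * Q1 ^ e * Q2 ^ e + Q1 ^ (e + b) * Q2 ^ e * Q0 ^ e
        + Q2 ^ (e + b) * Q0 ^ e * Q1 ^ e + Q0 ^ (e + b) * Q2 ^ e * Q1 ^ e := by
  have h1 : Q0 ^ (e + b) * Q1 ^ e * Q2 ^ e = Q0 ^ b * (Q0 * Q1 * Q2) ^ e := by
    rw [pow_add, mul_pow, mul_pow]; ring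
  have h2 : Q1 ^ (e + b) * Q2 ^ e * Q0 ^ e = Q1 ^ b * (Q0 * Q1 * Q2) ^ e := by
    rw [pow_add, mul_pow, mul_pow]; ring
  have h3 : Q2 ^ (e + b) * Q0 ^ e * Q1 ^ e = Q2 ^ b * (Q0 * Q1 * Q2) ^ e := by
    rw [pow_add, mul_pow, mul_pow]; ring
  have h4 : Q0 ^ (e + b) * Q2 ^ e * Q1 ^ e = Q0 ^ b * (Q0 * Q1 * Q2) ^ e := by
    rw [pow_add, mul_pow, mul_pow]; ring
  rw [h1, h2, h3, h4]
  have hP : r ^ (2 * e) ≤ (Q0 * Q1 * Q2) ^ e := by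
    calc r ^ (2 * e) = (r ^ 2) ^ e := by rw [← pow_mul]
    _ ≤ (Q0 * Q1 * Q2) ^ e := Nat.pow_le_pow_left hQprod e
  have hcoef : r ^ b + 1 ≤ Q0 ^ b + Q1 ^ b + Q2 ^ b + Q0 ^ b := by
    interval_cases b
    · simp
    · simp only [pow_one]; omega
  have hPpos : 0 < r ^ (2 * e) := pow_pos (by omega) _
  calc r ^ (2 * e + b) = r ^ b * r ^ (2 * e) := by rw [pow_add]; ring
  _ < (r ^ b + 1) * r ^ (2 * e) :=
      (Nat.mul_lt_mul_right hPpos).2 (show r ^ b < r ^ b + 1 by omega)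
  _ ≤ (Q0 ^ b + Q1 ^ b + Q2 ^ b + Q0 ^ b) * (Q0 * Q1 * Q2) ^ e :=
      Nat.mul_le_mul hcoef hP
  _ = Q0 ^ b * (Q0 * Q1 * Q2) ^ e + Q1 ^ b * (Q0 * Q1 * Q2) ^ e
      + Q2 ^ b * (Q0 * Q1 * Q2) ^ e + Q0 ^ b * (Q0 * Q1 * Q2) ^ e := by ring

theorem stmt6 (r n : ℕ) (hr : 27 ≤ r) (hn : 3 ≤ n) :
    ∃ G : SimpleGraph (Fin n),
      r ^ (n ^ 2 / 4) < Nat.card {c : G.edgeSet → Fin r // IsK32Free G c} ∧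
      Nat.card {c : (turanGraph n 2).edgeSet → Fin r // IsK32Free (turanGraph n 2) c} <
        Nat.card {c : G.edgeSet → Fin r // IsK32Free G c} := by
  classical
  set b : ℕ := if n % 4 = 2 then 1 else 0 with hb_def
  have hb : b ≤ 1 := by rw [hb_def]; split_ifs <;> omega
  have hQ := Q_facts r hr
  have hq0 := Q_card r 0 (by norm_num)
  have hq1 := Q_card r 1 (by norm_num)
  have hq2 := Q_card r 2 (by norm_num)
  have hQsum : Nat.card {x : Fin r // x.val % 3 = 0} + Nat.card {x : Fin r // x.val % 3 = 1}
      + Nat.card {x : Fin r // x.val % 3 = 2} = r := by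
    rw [hq0, hq1, hq2]; exact hQ.1
  have hQprod : r ^ 2 ≤ Nat.card {x : Fin r // x.val % 3 = 0}
      * Nat.card {x : Fin r // x.val % 3 = 1} * Nat.card {x : Fin r // x.val % 3 = 2} := by
    rw [hq0, hq1, hq2]; exact hQ.2
  have hQ0pos : 1 ≤ Nat.card {x : Fin r // x.val % 3 = 0} := by
    rw [hq0]
    have : 9 ≤ r / 3 := by omega
    omega
  have harith := final_arith r (n ^ 2 / 8) b
    (Nat.card {x : Fin r // x.val % 3 = 0}) (Nat.card {x : Fin r // x.val % 3 = 1})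
    (Nat.card {x : Fin r // x.val % 3 = 2}) hb hQsum hQprod hQ0pos (by omega)
  have hexp : n ^ 2 / 4 = 2 * (n ^ 2 / 8) + b := div_48 n
  have hT2 : Nat.card {c : (turanGraph n 2).edgeSet → Fin r // IsK32Free (turanGraph n 2) c}
      ≤ r ^ (n ^ 2 / 4) := by
    have h1 : Nat.card {c : (turanGraph n 2).edgeSet → Fin r // IsK32Free (turanGraph n 2) c}
        ≤ Nat.card ((turanGraph n 2).edgeSet → Fin r) :=
      Nat.card_le_card_of_injective Subtype.val Subtype.val_injective
    have h2 : Nat.card ((turanGraph n 2).edgeSet → Fin r)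
        = r ^ ((turanGraph n 2).edgeFinset.card) := by
      rw [Nat.card_fun, Nat.card_eq_fintype_card, Fintype.card_fin,
        Nat.card_eq_fintype_card, SimpleGraph.edgeFinset_card]
    have h3 : r ^ ((turanGraph n 2).edgeFinset.card) ≤ r ^ (n ^ 2 / 4) :=
      Nat.pow_le_pow_right (by omega) (T2_edge_bound n)
    exact le_trans (le_trans h1 (le_of_eq h2)) h3
  have hE0 : (Gc n 0).edgeFinset.card = n ^ 2 / 8 + b := by
    rw [Gc_card, hb_def]
    congr 1
    simp [Fin.val_zero]
  have hE1 : (Gc n 1).edgeFinset.card = n ^ 2 / 8 := by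
    rw [Gc_card]
    norm_num
  have hE2 : (Gc n 2).edgeFinset.card = n ^ 2 / 8 := by
    rw [Gc_card]
    norm_num
  have hA0 : Nat.card {c : (turanGraph n 4).edgeSet → Fin r //
      ∀ e : (turanGraph n 4).edgeSet, (c e).val % 3 = (pi4 0 (cls e.val)).val}
      = (Nat.card {x : Fin r // x.val % 3 = 0}) ^ (n ^ 2 / 8 + b)
        * (Nat.card {x : Fin r // x.val % 3 = 1}) ^ (n ^ 2 / 8)
        * (Nat.card {x : Fin r // x.val % 3 = 2}) ^ (n ^ 2 / 8) := by
    rw [palette_card n r (pi4 0), Fin.prod_univ_three, hE0, hE1, hE2]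
    rfl
  have hA1 : Nat.card {c : (turanGraph n 4).edgeSet → Fin r //
      ∀ e : (turanGraph n 4).edgeSet, (c e).val % 3 = (pi4 1 (cls e.val)).val}
      = (Nat.card {x : Fin r // x.val % 3 = 1}) ^ (n ^ 2 / 8 + b)
        * (Nat.card {x : Fin r // x.val % 3 = 2}) ^ (n ^ 2 / 8)
        * (Nat.card {x : Fin r // x.val % 3 = 0}) ^ (n ^ 2 / 8) := by
    rw [palette_card n r (pi4 1), Fin.prod_univ_three, hE0, hE1, hE2]
    rfl
  have hA2 : Nat.card {c : (turanGraph n 4).edgeSet → Fin r //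
      ∀ e : (turanGraph n 4).edgeSet, (c e).val % 3 = (pi4 2 (cls e.val)).val}
      = (Nat.card {x : Fin r // x.val % 3 = 2}) ^ (n ^ 2 / 8 + b)
        * (Nat.card {x : Fin r // x.val % 3 = 0}) ^ (n ^ 2 / 8)
        * (Nat.card {x : Fin r // x.val % 3 = 1}) ^ (n ^ 2 / 8) := by
    rw [palette_card n r (pi4 2), Fin.prod_univ_three, hE0, hE1, hE2]
    rfl
  have hA3 : Nat.card {c : (turanGraph n 4).edgeSet → Fin r //
      ∀ e : (turanGraph n 4).edgeSet, (c e).val % 3 = (pi4 3 (cls e.val)).val}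
      = (Nat.card {x : Fin r // x.val % 3 = 0}) ^ (n ^ 2 / 8 + b)
        * (Nat.card {x : Fin r // x.val % 3 = 2}) ^ (n ^ 2 / 8)
        * (Nat.card {x : Fin r // x.val % 3 = 1}) ^ (n ^ 2 / 8) := by
    rw [palette_card n r (pi4 3), Fin.prod_univ_three, hE0, hE1, hE2]
    rfl
  have hinj : Function.Injective
      (fun p : (i : Fin 4) × {c : (turanGraph n 4).edgeSet → Fin r //
          ∀ e : (turanGraph n 4).edgeSet, (c e).val % 3 = (pi4 i (cls e.val)).val} =>
        (⟨p.2.val, rainbow_valid n r (pi4 p.1) (pi4_inj p.1) p.2.val p.2.2⟩ :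
          {c : (turanGraph n 4).edgeSet → Fin r // IsK32Free (turanGraph n 4) c})) := by
    rintro ⟨i, c, hc⟩ ⟨i', c', hc'⟩ hEq
    simp only [Subtype.mk.injEq] at hEq
    have hii : i = i' := by
      by_contra hne
      obtain ⟨j, hj⟩ := pi4_ne i i' hne
      obtain ⟨e, he⟩ := exists_edge n hn j
      have ha := hc e
      have hb2 := hc' e
      rw [hEq, hb2, he] at ha
      rw [he] at hb2
      exact hj (Fin.val_injective ha.symm)
    subst hii
    have hcc : (⟨c, hc⟩ : {c : (turanGraph n 4).edgeSet → Fin r //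
        ∀ e : (turanGraph n 4).edgeSet, (c e).val % 3 = (pi4 i (cls e.val)).val}) = ⟨c', hc'⟩ :=
      Subtype.ext hEq
    rw [hcc]
  have hle := Nat.card_le_card_of_injective _ hinj
  have hsig := nat_card_sigma (fun i : Fin 4 =>
    {c : (turanGraph n 4).edgeSet → Fin r //
      ∀ e : (turanGraph n 4).edgeSet, (c e).val % 3 = (pi4 i (cls e.val)).val})
  rw [Fin.sum_univ_four] at hsig
  rw [hsig, hA0, hA1, hA2, hA3] at hle
  have key : r ^ (n ^ 2 / 4)
      < Nat.card {c : (turanGraph n 4).edgeSet → Fin r // IsK32Free (turanGraph n 4) c} := by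
    rw [hexp]
    exact lt_of_lt_of_le harith hle
  exact ⟨turanGraph n 4, key, lt_of_le_of_lt hT2 key⟩
end

section
/- Let r be an integer with 13 ≤ r ≤ 26, and set r₀ = 6 if r = 13 and r₀ = ⌊r − 2√r⌋ if 14 ≤ r ≤ 26. Let H be a multicolored cluster graph on m vertices with color set {1,…,r} that is K₃⁽²⁾-free, in which every edge e satisfies 2 ≤ |L_e| ≤ r₀, such that moreover H contains no copy of K₄ and no triangle all three of whose edges have lists of size at least 4. Then for every real α with 0 < α ≤ 1/1000, we have ∏_{e ∈ E(H)} |L_e| ≤ r^{(1/4 − α)·m²}. -/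
open SimpleGraph

/-- A multicolored cluster graph `(H, L)` is `K₃⁽²⁾`-free if for every triangle of `H`
the three lists of its edges are pairwise disjoint. -/
def ClusterK32Free {V : Type*} {r : ℕ} (H : SimpleGraph V)
    (L : H.edgeSet → Finset (Fin r)) : Prop :=
  ∀ (a b d : V) (hab : H.Adj a b) (hbd : H.Adj b d) (had : H.Adj a d),
    Disjoint (L ⟨s(a, b), hab⟩) (L ⟨s(b, d), hbd⟩) ∧
    Disjoint (L ⟨s(a, b), hab⟩) (L ⟨s(a, d), had⟩) ∧
    Disjoint (L ⟨s(b, d), hbd⟩) (L ⟨s(a, d), had⟩)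

/-- `r₀ = 6` if `r = 13`, and `r₀ = ⌊r - 2√r⌋` otherwise. -/
noncomputable def r0 (r : ℕ) : ℕ :=
  if r = 13 then 6 else ⌊(r : ℝ) - 2 * Real.sqrt r⌋₊

open Finset in
private lemma turan_edge_bound' {m k : ℕ} (hk : 0 < k) (G : SimpleGraph (Fin m))
    [DecidableRel G.Adj] [Fintype G.edgeSet] (h : G.CliqueFree (k + 1)) :
    k * (2 * G.edgeFinset.card) + m ^ 2 ≤ k * m ^ 2 := by
  classical
  have h1 : G.edgeFinset.card ≤ (turanGraph m k).edgeFinset.card := by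
    have := (isTuranMaximal_turanGraph (n := m) hk).2 (G' := G) h
    convert this using 2
    ext e
    simp [edgeFinset]
  let T := turanGraph m k
  let c : ℕ → ℕ := fun i => #(univ.filter fun w : Fin m => (w : ℕ) % k = i)
  have hdeg : ∀ v : Fin m, T.degree v + c ((v : ℕ) % k) = m := by
    intro v
    have hd : T.degree v = #(univ.filter fun w : Fin m => ¬ ((w : ℕ) % k = (v : ℕ) % k)) := by
      rw [← card_neighborFinset_eq_degree, neighborFinset_eq_filter]
      congr 1
      apply filter_congr
      intro w _
      constructor
      · intro hw
        exact fun hh => hw hh.symm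
      · intro hw hh
        exact hw hh.symm
    have h2 := card_filter_add_card_filter_not
      (s := (univ : Finset (Fin m))) (p := fun w : Fin m => ((w : ℕ) % k = (v : ℕ) % k))
    simp only [card_univ, Fintype.card_fin] at h2
    show T.degree v + #(univ.filter fun w : Fin m => (w : ℕ) % k = (v : ℕ) % k) = m
    rw [hd]
    omega
  have hsum : 2 * T.edgeFinset.card + (∑ v : Fin m, c ((v : ℕ) % k)) = m ^ 2 := by
    have hds := T.sum_degrees_eq_twice_card_edges
    have h2 : (∑ v : Fin m, T.degree v) + (∑ v : Fin m, c ((v : ℕ) % k)) = m * m := by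
      rw [← Finset.sum_add_distrib]
      simp only [hdeg]
      simp [Finset.sum_const, card_univ]
    rw [hds] at h2
    rw [pow_two]
    omega
  let I := (univ : Finset (Fin m)).image (fun v : Fin m => (v : ℕ) % k)
  have hfib : (∑ v : Fin m, c ((v : ℕ) % k)) = ∑ i ∈ I, c i * c i := by
    rw [Finset.sum_comp c (fun v : Fin m => (v : ℕ) % k)]
    apply Finset.sum_congr rfl
    intro i _
    rw [smul_eq_mul]
  have hcardsum : (∑ i ∈ I, c i) = m := by
    have h3 := Finset.sum_comp (fun _ : ℕ => (1 : ℕ)) (fun v : Fin m => (v : ℕ) % k)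
      (s := (univ : Finset (Fin m)))
    simp only [smul_eq_mul, mul_one] at h3
    have h4 : (∑ _v : Fin m, (1 : ℕ)) = m := by simp
    rw [h4] at h3
    exact h3.symm
  have hIle : #I ≤ k := by
    have hsub : I ⊆ Finset.range k := by
      intro i hi
      simp only [I, Finset.mem_image] at hi
      obtain ⟨v, _, rfl⟩ := hi
      exact Finset.mem_range.2 (Nat.mod_lt _ hk)
    simpa using Finset.card_le_card hsub
  have hm2 : m ^ 2 ≤ k * ∑ i ∈ I, c i * c i := by
    have hcs := sq_sum_le_card_mul_sum_sq (s := I) (f := c)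
    rw [hcardsum] at hcs
    calc m ^ 2 ≤ #I * ∑ i ∈ I, c i ^ 2 := hcs
      _ ≤ k * ∑ i ∈ I, c i ^ 2 := Nat.mul_le_mul_right _ hIle
      _ = k * ∑ i ∈ I, c i * c i := by simp_rw [pow_two]
  calc k * (2 * G.edgeFinset.card) + m ^ 2
      ≤ k * (2 * T.edgeFinset.card) + k * ∑ i ∈ I, c i * c i := by
        exact Nat.add_le_add (Nat.mul_le_mul_left _ (Nat.mul_le_mul_left _ h1)) hm2
    _ = k * (2 * T.edgeFinset.card + ∑ v : Fin m, c ((v : ℕ) % k)) := by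
        rw [hfib, Nat.mul_add]
    _ = k * m ^ 2 := by rw [hsum]

private lemma r0_le' (r k : ℕ) (hne : r ≠ 13) (hsq : ((r : ℝ) - k - 1) ^ 2 < 4 * r) :
    r0 r ≤ k := by
  rw [r0, if_neg hne]
  have h2 : (r : ℝ) - 2 * Real.sqrt r < (k : ℝ) + 1 := by
    nlinarith [Real.sq_sqrt (by positivity : (0:ℝ) ≤ (r : ℝ)), Real.sqrt_nonneg (r : ℝ),
      sq_nonneg ((r : ℝ) - k - 1 - 2 * Real.sqrt r)]
  have h3 : ⌊(r : ℝ) - 2 * Real.sqrt r⌋₊ < k + 1 := by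
    apply (Nat.floor_lt' (by omega)).2
    push_cast
    linarith
  omega

private lemma key_real' (r k a b m : ℕ) (hk3 : 3 ≤ k) (hr : 13 ≤ r)
    (hnum : (3 * k ^ 3) ^ 250 ≤ r ^ 747)
    (h4a : 4 * a ≤ m ^ 2) (h3ab : 3 * (a + b) ≤ m ^ 2) :
    (k : ℝ) ^ a * 3 ^ b ≤ (r : ℝ) ^ ((249 / 1000 : ℝ) * (m : ℝ) ^ 2) := by
  have hk0 : (0:ℝ) < (k : ℝ) := by
    have : (3:ℝ) ≤ (k : ℝ) := by exact_mod_cast hk3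
    linarith
  have hr0 : (0:ℝ) < (r : ℝ) := by
    have : (13:ℝ) ≤ (r : ℝ) := by exact_mod_cast hr
    linarith
  have hLkL3 : Real.log 3 ≤ Real.log (k : ℝ) :=
    Real.log_le_log (by norm_num) (by exact_mod_cast hk3)
  have hL3 : (0:ℝ) ≤ Real.log 3 := Real.log_nonneg (by norm_num)
  have hlog : 250 * (Real.log 3 + 3 * Real.log (k : ℝ)) ≤ 747 * Real.log (r : ℝ) := by
    have hcast : ((3 * k ^ 3 : ℕ) : ℝ) ^ 250 ≤ ((r : ℕ) : ℝ) ^ 747 := by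
      exact_mod_cast hnum
    have hlt : (0:ℝ) < ((3 * k ^ 3 : ℕ) : ℝ) ^ 250 := by positivity
    have h := Real.log_le_log hlt hcast
    rw [Real.log_pow, Real.log_pow] at h
    push_cast at h
    rw [Real.log_mul (by norm_num) (by positivity), Real.log_pow] at h
    push_cast at h
    linarith
  have hLHSpos : (0:ℝ) < (k : ℝ) ^ a * 3 ^ b := by positivity
  have hRHSpos : (0:ℝ) < (r : ℝ) ^ ((249 / 1000 : ℝ) * (m : ℝ) ^ 2) :=
    Real.rpow_pos_of_pos hr0 _
  rw [← Real.log_le_log_iff hLHSpos hRHSpos]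
  rw [Real.log_mul (by positivity) (by positivity), Real.log_pow, Real.log_pow,
    Real.log_rpow hr0]
  have hA : (4 : ℝ) * a ≤ (m : ℝ) ^ 2 := by exact_mod_cast h4a
  have hAB : (3 : ℝ) * ((a : ℝ) + b) ≤ (m : ℝ) ^ 2 := by exact_mod_cast h3ab
  have ha0 : (0:ℝ) ≤ (a : ℝ) := Nat.cast_nonneg a
  have hb0 : (0:ℝ) ≤ (b : ℝ) := Nat.cast_nonneg b
  have hm0 : (0:ℝ) ≤ (m : ℝ) ^ 2 := by positivity
  have e1 : (0:ℝ) ≤ ((m : ℝ) ^ 2 - 4 * a) * (Real.log (k : ℝ) - Real.log 3) :=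
    mul_nonneg (by linarith) (by linarith)
  have e2 : (0:ℝ) ≤ ((m : ℝ) ^ 2 - 3 * a - 3 * b) * Real.log 3 :=
    mul_nonneg (by linarith) hL3
  have e3 : (0:ℝ) ≤ (747 * Real.log (r : ℝ) - 250 * (Real.log 3 + 3 * Real.log (k : ℝ)))
      * (m : ℝ) ^ 2 := mul_nonneg (by linarith) hm0
  set_option maxRecDepth 4000 in
  linarith [e1, e2, e3]

open Finset in
theorem stmt8 (r m : ℕ) (hr13 : 13 ≤ r) (hr26 : r ≤ 26)
    (H : SimpleGraph (Fin m)) [Fintype H.edgeSet]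
    (L : H.edgeSet → Finset (Fin r))
    (hfree : ClusterK32Free H L)
    (hlist : ∀ e : H.edgeSet, 2 ≤ (L e).card ∧ (L e).card ≤ r0 r)
    (hK4 : H.CliqueFree 4)
    (hT : ¬ ∃ (a b d : Fin m) (hab : H.Adj a b) (hbd : H.Adj b d) (had : H.Adj a d),
      4 ≤ (L ⟨s(a, b), hab⟩).card ∧ 4 ≤ (L ⟨s(b, d), hbd⟩).card ∧
      4 ≤ (L ⟨s(a, d), had⟩).card)
    (α : ℝ) (hα0 : 0 < α) (hα1 : α ≤ 1 / 1000) :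
    (∏ e : H.edgeSet, ((L e).card : ℝ)) ≤ (r : ℝ) ^ ((1 / 4 - α) * (m : ℝ) ^ 2) := by
  classical
  obtain ⟨k, hr0k, hk3, hnum⟩ : ∃ k : ℕ, r0 r ≤ k ∧ 3 ≤ k ∧ (3 * k ^ 3) ^ 250 ≤ r ^ 747 := by
    interval_cases r
    · exact ⟨6, le_of_eq (by rw [r0, if_pos rfl]), by norm_num, by rw [show (747:ℕ) = 3 * 249 from rfl, pow_mul]; norm_num⟩
    · exact ⟨6, r0_le' 14 6 (by norm_num) (by norm_num), by norm_num, by rw [show (747:ℕ) = 3 * 249 from rfl, pow_mul]; norm_num⟩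
    · exact ⟨7, r0_le' 15 7 (by norm_num) (by norm_num), by norm_num, by rw [show (747:ℕ) = 3 * 249 from rfl, pow_mul]; norm_num⟩
    · exact ⟨8, r0_le' 16 8 (by norm_num) (by norm_num), by norm_num, by rw [show (747:ℕ) = 3 * 249 from rfl, pow_mul]; norm_num⟩
    · exact ⟨8, r0_le' 17 8 (by norm_num) (by norm_num), by norm_num, by rw [show (747:ℕ) = 3 * 249 from rfl, pow_mul]; norm_num⟩
    · exact ⟨9, r0_le' 18 9 (by norm_num) (by norm_num), by norm_num, by rw [show (747:ℕ) = 3 * 249 from rfl, pow_mul]; norm_num⟩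
    · exact ⟨10, r0_le' 19 10 (by norm_num) (by norm_num), by norm_num, by rw [show (747:ℕ) = 3 * 249 from rfl, pow_mul]; norm_num⟩
    · exact ⟨11, r0_le' 20 11 (by norm_num) (by norm_num), by norm_num, by rw [show (747:ℕ) = 3 * 249 from rfl, pow_mul]; norm_num⟩
    · exact ⟨11, r0_le' 21 11 (by norm_num) (by norm_num), by norm_num, by rw [show (747:ℕ) = 3 * 249 from rfl, pow_mul]; norm_num⟩
    · exact ⟨12, r0_le' 22 12 (by norm_num) (by norm_num), by norm_num, by rw [show (747:ℕ) = 3 * 249 from rfl, pow_mul]; norm_num⟩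
    · exact ⟨13, r0_le' 23 13 (by norm_num) (by norm_num), by norm_num, by rw [show (747:ℕ) = 3 * 249 from rfl, pow_mul]; norm_num⟩
    · exact ⟨14, r0_le' 24 14 (by norm_num) (by norm_num), by norm_num, by rw [show (747:ℕ) = 3 * 249 from rfl, pow_mul]; norm_num⟩
    · exact ⟨15, r0_le' 25 15 (by norm_num) (by norm_num), by norm_num, by rw [show (747:ℕ) = 3 * 249 from rfl, pow_mul]; norm_num⟩
    · exact ⟨15, r0_le' 26 15 (by norm_num) (by norm_num), by norm_num, by rw [show (747:ℕ) = 3 * 249 from rfl, pow_mul]; norm_num⟩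
  -- the subgraph of edges with big lists
  let G : SimpleGraph (Fin m) :=
    { Adj := fun x y => ∃ h : H.Adj x y, 4 ≤ (L ⟨s(x, y), h⟩).card
      symm := ⟨by
        rintro x y ⟨h, h4⟩
        refine ⟨h.symm, ?_⟩
        have hval : (⟨s(y, x), h.symm⟩ : H.edgeSet) = ⟨s(x, y), h⟩ :=
          Subtype.ext Sym2.eq_swap
        rw [hval]
        exact h4⟩
      loopless := ⟨by
        rintro x ⟨h, -⟩
        exact H.loopless.irrefl x h⟩ }
  letI : DecidableRel G.Adj := Classical.decRel _
  letI : Fintype G.edgeSet := Fintype.ofFinite _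
  letI : DecidableRel H.Adj := Classical.decRel _
  have hGfree : G.CliqueFree 3 := by
    intro t ht
    rw [is3Clique_iff] at ht
    obtain ⟨x, y, z, hxy, hxz, hyz, rfl⟩ := ht
    obtain ⟨h1, c1⟩ := hxy
    obtain ⟨h2, c2⟩ := hxz
    obtain ⟨h3, c3⟩ := hyz
    exact hT ⟨x, y, z, h1, h3, h2, c1, c3, c2⟩
  set P : H.edgeSet → Prop := fun e => 4 ≤ (L e).card with hPdef
  have hsplit : (∏ e : H.edgeSet, ((L e).card : ℝ)) =
      (∏ e ∈ univ.filter P, ((L e).card : ℝ)) *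
        ∏ e ∈ univ.filter (fun e => ¬ P e), ((L e).card : ℝ) :=
    (Finset.prod_filter_mul_prod_filter_not univ P _).symm
  set a := #(univ.filter P) with hadef
  set b := #(univ.filter fun e => ¬ P e) with hbdef
  have hprod1 : (∏ e ∈ univ.filter P, ((L e).card : ℝ)) ≤ (k : ℝ) ^ a := by
    rw [hadef, ← Finset.prod_const]
    apply Finset.prod_le_prod
    · intro e _
      exact Nat.cast_nonneg _
    · intro e _
      exact_mod_cast le_trans (hlist e).2 hr0k
  have hprod2 : (∏ e ∈ univ.filter (fun e => ¬ P e), ((L e).card : ℝ)) ≤ (3 : ℝ) ^ b := by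
    rw [hbdef, ← Finset.prod_const]
    apply Finset.prod_le_prod
    · intro e _
      exact Nat.cast_nonneg _
    · intro e he
      rw [Finset.mem_filter] at he
      have : (L e).card ≤ 3 := by
        have := he.2
        rw [hPdef] at this
        omega
      exact_mod_cast this
  have haG : a ≤ #G.edgeFinset := by
    rw [hadef]
    apply Finset.card_le_card_of_injOn (fun e => (e : H.edgeSet).1)
    · rintro ⟨e, he⟩ hmem
      rw [Finset.mem_coe, Finset.mem_filter] at hmem
      have h4 := hmem.2
      rw [hPdef] at h4
      clear hmem
      revert h4 he
      induction e using Sym2.ind with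
      | _ x y =>
        intro he h4
        rw [Finset.mem_coe, mem_edgeFinset, mem_edgeSet]
        exact ⟨(H.mem_edgeSet).1 he, h4⟩
    · intro e _ f _ hef
      exact Subtype.ext hef
  have habsum : a + b = #H.edgeFinset := by
    rw [hadef, hbdef, edgeFinset_card]
    have := Finset.card_filter_add_card_filter_not
      (s := (univ : Finset H.edgeSet)) (p := P)
    rwa [Finset.card_univ] at this
  have hb1 := turan_edge_bound' (k := 2) (by norm_num) G hGfree
  have hb2 := turan_edge_bound' (k := 3) (by norm_num) H hK4
  have h4a : 4 * a ≤ m ^ 2 := by clear hnum; omega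
  have h3ab : 3 * (a + b) ≤ m ^ 2 := by clear hnum; omega
  have hkey := key_real' r k a b m hk3 hr13 hnum h4a h3ab
  have hr1 : (1 : ℝ) ≤ (r : ℝ) := by
    have : (13:ℝ) ≤ (r:ℝ) := by exact_mod_cast hr13
    linarith
  have hfinal : (r : ℝ) ^ ((249 / 1000 : ℝ) * (m : ℝ) ^ 2) ≤
      (r : ℝ) ^ ((1 / 4 - α) * (m : ℝ) ^ 2) := by
    apply Real.rpow_le_rpow_of_exponent_le hr1
    have hm0 : (0:ℝ) ≤ (m : ℝ) ^ 2 := by positivity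
    have h1 : (249 / 1000 : ℝ) ≤ 1 / 4 - α := by linarith
    have h2 := mul_le_mul_of_nonneg_right h1 hm0
    linarith
  have hnn1 : (0:ℝ) ≤ ∏ e ∈ univ.filter P, ((L e).card : ℝ) :=
    Finset.prod_nonneg fun e _ => Nat.cast_nonneg _
  have hnn2 : (0:ℝ) ≤ ∏ e ∈ univ.filter (fun e => ¬ P e), ((L e).card : ℝ) :=
    Finset.prod_nonneg fun e _ => Nat.cast_nonneg _
  calc (∏ e : H.edgeSet, ((L e).card : ℝ))
      = (∏ e ∈ univ.filter P, ((L e).card : ℝ)) *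
        ∏ e ∈ univ.filter (fun e => ¬ P e), ((L e).card : ℝ) := hsplit
    _ ≤ (k : ℝ) ^ a * 3 ^ b := by
        exact mul_le_mul hprod1 hprod2 hnn2 (pow_nonneg (Nat.cast_nonneg k) a)
    _ ≤ (r : ℝ) ^ ((249 / 1000 : ℝ) * (m : ℝ) ^ 2) := hkey
    _ ≤ (r : ℝ) ^ ((1 / 4 - α) * (m : ℝ) ^ 2) := hfinal
end

section
/- Let r ≥ 2 and k ≥ 3 be integers. Let H be a K₃⁽²⁾-free multicolored cluster graph with color set {1,…,r} such that |L_e| ≥ 2 for every edge e, and let A ⊆ V(H) be a set of k vertices inducing a complete graph K_k in H. Then for every vertex v ∈ V(H) \ A, writing E′(v) for the set of edges of H joining v to a vertex of A, we have ∏_{e ∈ E′(v)} |L_e| ≤ max{ (r/j)^j : j ∈ {1,…,k} }. -/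
open SimpleGraph

/-! Any two neighbours `a, b` of `v` in the clique `A` span a triangle `vab`, so the lists of the
edges `va`, `vb` are disjoint. Hence the list sizes on the edges from `v` to `A` are
`j ≤ |A|` numbers summing to at most `r`, and AM-GM bounds their product by `(r / j) ^ j`. -/

open Finset

lemma Real.prod_le_div_card_pow {ι : Type*} {s : Finset ι} {f : ι → ℝ}
    (hf : ∀ i ∈ s, 0 ≤ f i) {C : ℝ} (hC : ∑ i ∈ s, f i ≤ C) :
    ∏ i ∈ s, f i ≤ (C / #s) ^ #s := by
  rcases s.eq_empty_or_nonempty with rfl | hs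
  · simp
  have hn : (0 : ℝ) < #s := by exact_mod_cast hs.card_pos
  have hgm : (∏ i ∈ s, f i) ^ ((#s : ℝ)⁻¹) ≤ C / #s := by
    have := Real.geom_mean_le_arith_mean s (fun _ ↦ 1) f (fun _ _ ↦ zero_le_one)
      (by simpa using hn) hf
    simp only [Real.rpow_one, sum_const, nsmul_eq_mul, mul_one, one_mul] at this
    exact this.trans (by gcongr)
  calc ∏ i ∈ s, f i = ((∏ i ∈ s, f i) ^ ((#s : ℝ)⁻¹)) ^ #s :=
        (Real.rpow_inv_natCast_pow (prod_nonneg hf) hs.card_pos.ne').symm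
    _ ≤ (C / #s) ^ #s := by
        gcongr
        exact Real.rpow_nonneg (prod_nonneg hf) _

lemma Finset.sum_card_le_card_of_pairwiseDisjoint {ι α : Type*} [Fintype α] {s : Finset ι}
    {t : ι → Finset α} (h : (s : Set ι).PairwiseDisjoint t) :
    ∑ i ∈ s, #(t i) ≤ Fintype.card α := by
  classical
  rw [← card_biUnion h]
  exact card_le_univ _

namespace ClusterK32Free

variable {V : Type*} {r : ℕ} {H : SimpleGraph V} {L : H.edgeSet → Finset (Fin r)}

lemma disjoint_of_adj (hfree : ClusterK32Free H L) {v a b : V} (hva : H.Adj v a)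
    (hvb : H.Adj v b) (hab : H.Adj a b) :
    Disjoint (L ⟨s(v, a), hva⟩) (L ⟨s(v, b), hvb⟩) := by
  have h := (hfree a v b hva.symm hvb hab).1
  rwa [show (⟨s(a, v), hva.symm⟩ : H.edgeSet) = ⟨s(v, a), hva⟩ from Subtype.ext Sym2.eq_swap]
    at h

variable [DecidableRel H.Adj]

variable (L) in
def edgeList (v a : V) : Finset (Fin r) :=
  if h : H.Adj v a then L ⟨s(v, a), h⟩ else ∅

lemma pairwiseDisjoint_edgeList (hfree : ClusterK32Free H L) {s : Set V} (hs : H.IsClique s)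
    (v : V) : s.PairwiseDisjoint (edgeList L v) := by
  intro a ha b hb hab
  simp only [Function.onFun, edgeList]
  split_ifs with hva hvb
  · exact hfree.disjoint_of_adj hva hvb (hs ha hb hab)
  all_goals simp

lemma prod_card_le (hfree : ClusterK32Free H L) {A : Finset V} (hA : H.IsClique (A : Set V))
    (v : V) :
    (∏ a ∈ A, if h : H.Adj v a then ((L ⟨s(v, a), h⟩).card : ℝ) else 1) ≤
      (r / #{a ∈ A | H.Adj v a}) ^ #{a ∈ A | H.Adj v a} := by
  have hprod : (∏ a ∈ A, if h : H.Adj v a then ((L ⟨s(v, a), h⟩).card : ℝ) else 1) =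
      ∏ a ∈ A with H.Adj v a, (#(edgeList L v a) : ℝ) := by
    rw [prod_filter]
    refine prod_congr rfl fun a _ ↦ ?_
    split_ifs with h <;> simp [edgeList, h]
  have hsum : ∑ a ∈ A with H.Adj v a, (#(edgeList L v a) : ℝ) ≤ r := by
    have := sum_card_le_card_of_pairwiseDisjoint
      ((hfree.pairwiseDisjoint_edgeList hA v).subset (coe_subset.mpr (filter_subset (H.Adj v) A)))
    exact_mod_cast (Fintype.card_fin r ▸ this)
  rw [hprod]
  exact Real.prod_le_div_card_pow (fun _ _ ↦ Nat.cast_nonneg _) hsum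

end ClusterK32Free

theorem stmt9 (r k : ℕ) (hr : 2 ≤ r) (hk : 3 ≤ k)
    {V : Type*} (H : SimpleGraph V) [DecidableRel H.Adj]
    (L : H.edgeSet → Finset (Fin r))
    (hfree : ClusterK32Free H L)
    (A : Finset V) (hA : A.card = k)
    (hclique : ∀ a ∈ A, ∀ b ∈ A, a ≠ b → H.Adj a b)
    (v : V) :
    -- the product of the list sizes over the edges joining `v` to `A`
    (∏ a ∈ A.attach, if h : H.Adj v (a : V) then ((L ⟨s(v, (a : V)), h⟩).card : ℝ) else 1) ≤
      (Finset.Icc 1 k).sup' ⟨1, Finset.mem_Icc.mpr ⟨le_rfl, by omega⟩⟩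
        (fun j => ((r : ℝ) / (j : ℝ)) ^ j) := by
  rw [prod_attach A fun a ↦ if h : H.Adj v a then ((L ⟨s(v, a), h⟩).card : ℝ) else 1]
  refine (hfree.prod_card_le (fun a ha b hb ↦ hclique a ha b hb) v).trans ?_
  have hjk : #{a ∈ A | H.Adj v a} ≤ k := hA ▸ card_filter_le _ _
  rcases Nat.eq_zero_or_pos #{a ∈ A | H.Adj v a} with hj | hj
  · refine le_sup'_of_le _ (mem_Icc.mpr ⟨le_rfl, by omega⟩) ?_
    rw [hj]
    simpa using (by exact_mod_cast hr.trans' one_le_two : (1 : ℝ) ≤ r)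
  · exact le_sup' (fun j : ℕ ↦ ((r : ℝ) / j) ^ j) (mem_Icc.mpr ⟨hj, hjk⟩)
end

section
/- Let r ≥ 1 and k ≥ 3 be integers. For some j ≥ 1, let E(K_k) = E₁ ∪ ⋯ ∪ E_j be a partition of the edge set of the complete graph K_k and let s₁,…,s_j be integers with 1 ≤ s_i ≤ r for each i, such that r·⌊k/2⌋ < Σ_{i=1}^{j} |E_i|·s_i. Then for every assignment of lists L_e ⊆ {1,…,r} to the edges of K_k such that each edge e ∈ E_i has |L_e| ≥ s_i, there exists a triangle in K_k two of whose edges have lists with non-empty intersection. -/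
open SimpleGraph

theorem stmt10 (r k j : ℕ) (hr : 1 ≤ r) (hk : 3 ≤ k) (hj : 1 ≤ j)
    -- `P` assigns to each edge of `K_k` (non-diagonal element of `Sym2 (Fin k)`) its class,
    -- giving a partition `E(K_k) = E₁ ∪ ⋯ ∪ E_j`
    (P : Sym2 (Fin k) → Fin j) (s : Fin j → ℕ)
    (hs : ∀ i : Fin j, 1 ≤ s i ∧ s i ≤ r)
    -- `r⌊k/2⌋ < Σᵢ |Eᵢ| sᵢ`
    (hsum : r * (k / 2) <
      ∑ e ∈ Finset.univ.filter (fun e : Sym2 (Fin k) => ¬ e.IsDiag), s (P e))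
    (L : Sym2 (Fin k) → Finset (Fin r))
    (hL : ∀ e : Sym2 (Fin k), ¬ e.IsDiag → s (P e) ≤ (L e).card) :
    ∃ a b c : Fin k, a ≠ b ∧ a ≠ c ∧ b ≠ c ∧
      (¬ Disjoint (L s(a, b)) (L s(a, c)) ∨ ¬ Disjoint (L s(a, b)) (L s(b, c)) ∨
       ¬ Disjoint (L s(a, c)) (L s(b, c))) := by
  by_contra hcon
  push_neg at hcon
  set E : Finset (Sym2 (Fin k)) :=
    Finset.univ.filter (fun e : Sym2 (Fin k) => ¬ e.IsDiag) with hE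
  -- vertex set of an edge
  set t : Sym2 (Fin k) → Finset (Fin k) :=
    fun e => Finset.univ.filter (fun a => a ∈ e) with ht
  have hmem : ∀ e a, a ∈ t e ↔ a ∈ e := by
    intro e a; simp [ht]
  have hcard : ∀ e ∈ E, (t e).card = 2 := by
    intro e he
    rw [hE, Finset.mem_filter] at he
    induction e using Sym2.ind with
    | _ a b =>
      have hab : a ≠ b := by
        intro h; exact he.2 (by simp [h, Sym2.isDiag_iff_proj_eq])
      have : t s(a, b) = {a, b} := by
        ext x; simp [ht, Sym2.mem_iff]
      rw [this, Finset.card_insert_of_notMem (by simp [hab]), Finset.card_singleton]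
  -- two distinct edges sharing a vertex have disjoint lists
  have share : ∀ e ∈ E, ∀ f ∈ E, e ≠ f → ∀ a : Fin k, a ∈ e → a ∈ f →
      Disjoint (L e) (L f) := by
    intro e he f hf hef a hae haf
    rw [hE, Finset.mem_filter] at he hf
    have hb := Sym2.other_spec' hae
    have hc := Sym2.other_spec' haf
    set b := Sym2.Mem.other' hae
    set c := Sym2.Mem.other' haf
    have hab : a ≠ b := by
      intro h; exact he.2 (by rw [← hb, ← h]; exact Sym2.mk_isDiag_iff.2 rfl)
    have hac : a ≠ c := by
      intro h; exact hf.2 (by rw [← hc, ← h]; exact Sym2.mk_isDiag_iff.2 rfl)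
    have hbc : b ≠ c := by
      intro h; exact hef (by rw [← hb, ← hc, h])
    have := (hcon a b c hab hac hbc).1
    rwa [hb, hc] at this
  -- per-color matching bound
  have color_bound : ∀ c : Fin r, (E.filter (fun e => c ∈ L e)).card ≤ k / 2 := by
    intro c
    set S := E.filter (fun e => c ∈ L e) with hS
    have hdisj : ∀ e ∈ S, ∀ f ∈ S, e ≠ f → Disjoint (t e) (t f) := by
      intro e he f hf hef
      rw [hS, Finset.mem_filter] at he hf
      rw [Finset.disjoint_left]
      intro a hae haf
      have := share e he.1 f hf.1 hef a ((hmem e a).1 hae) ((hmem f a).1 haf)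
      exact Finset.disjoint_left.1 this he.2 hf.2
    have hunion : (S.biUnion t).card = ∑ e ∈ S, (t e).card :=
      Finset.card_biUnion hdisj
    have h2 : ∑ e ∈ S, (t e).card = 2 * S.card := by
      rw [Finset.sum_congr rfl (fun e he => hcard e (Finset.mem_filter.1 he).1)]
      simp [mul_comm]
      rfl
    have hk' : (S.biUnion t).card ≤ k := by
      simpa using Finset.card_le_card (Finset.subset_univ (S.biUnion t))
    have : 2 * S.card ≤ k := by omega
    omega
  -- double counting
  have hsum2 : ∑ e ∈ E, s (P e) ≤ ∑ e ∈ E, (L e).card :=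
    Finset.sum_le_sum (fun e he => hL e (Finset.mem_filter.1 he).2)
  have hswap : ∑ e ∈ E, (L e).card
      = ∑ c : Fin r, (E.filter (fun e => c ∈ L e)).card := by
    calc ∑ e ∈ E, (L e).card
        = ∑ e ∈ E, ∑ c : Fin r, (if c ∈ L e then 1 else 0) := by
          refine Finset.sum_congr rfl (fun e _ => ?_)
          rw [← Finset.card_filter]
          congr 1
          ext x; simp
      _ = ∑ c : Fin r, ∑ e ∈ E, (if c ∈ L e then 1 else 0) := Finset.sum_comm
      _ = ∑ c : Fin r, (E.filter (fun e => c ∈ L e)).card := by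
          refine Finset.sum_congr rfl (fun c _ => ?_)
          exact (Finset.card_filter _ _).symm
  have hfin : ∑ c : Fin r, (E.filter (fun e => c ∈ L e)).card ≤ r * (k / 2) := by
    calc ∑ c : Fin r, (E.filter (fun e => c ∈ L e)).card
        ≤ ∑ _c : Fin r, k / 2 := Finset.sum_le_sum (fun c _ => color_bound c)
      _ = r * (k / 2) := by simp [Finset.sum_const, mul_comm]
  omega
end

section
/- Let r ≥ 2 and k ≥ 3 be integers. Let H be a multicolored cluster graph with color set {1,…,r} whose underlying graph is the complete graph K_k, whose every edge e has |L_e| ≥ 2, and which is K₃⁽²⁾-free. Then ∏_{e ∈ E(H)} |L_e| ≤ ( r·⌊k/2⌋ / C(k,2) )^{C(k,2)}, where C(k,2) = k(k−1)/2. -/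
/-!
For each color `c`, the edges whose lists contain `c` form a matching: two of them sharing a
vertex would span a triangle whose lists are not pairwise disjoint. Hence every color lies on at
most `⌊k/2⌋` edges and, counting incidences, `∑ₑ |Lₑ| ≤ r⌊k/2⌋`. AM-GM over the `C(k,2)` edges
turns this bound on the sum into the bound on the product.
-/

open Finset

namespace Real

theorem prod_le_div_card_pow_of_sum_le {ι : Type*} {s : Finset ι} {z : ι → ℝ} {B : ℝ}
    (hz : ∀ i ∈ s, 0 ≤ z i) (hB : ∑ i ∈ s, z i ≤ B) :
    ∏ i ∈ s, z i ≤ (B / #s) ^ #s := by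
  rcases s.eq_empty_or_nonempty with rfl | hs
  · simp
  have hn : (0 : ℝ) < #s := by exact_mod_cast hs.card_pos
  have amgm := geom_mean_le_arith_mean s (fun _ => 1) z (fun _ _ => zero_le_one)
    (by simpa using hn) hz
  simp only [rpow_one, one_mul, sum_const, nsmul_eq_mul, mul_one] at amgm
  have hprod := prod_nonneg hz
  calc ∏ i ∈ s, z i = ((∏ i ∈ s, z i) ^ (#s : ℝ)⁻¹) ^ #s := by
        rw [← rpow_natCast, ← rpow_mul hprod, inv_mul_cancel₀ hn.ne', rpow_one]
    _ ≤ ((∑ i ∈ s, z i) / #s) ^ #s := by gcongr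
    _ ≤ (B / #s) ^ #s := by gcongr; exact div_nonneg (sum_nonneg hz) hn.le

end Real

section

variable {V C : Type*}

def DisjointOnAdjacentEdges (L : Sym2 V → Finset C) : Prop :=
  ∀ a b c : V, a ≠ b → a ≠ c → b ≠ c → Disjoint (L s(a, b)) (L s(a, c))

theorem DisjointOnAdjacentEdges.eq_of_mem {L : Sym2 V → Finset C}
    (hL : DisjointOnAdjacentEdges L) {c : C} {v : V} {e e' : Sym2 V} (he : ¬ e.IsDiag)
    (he' : ¬ e'.IsDiag) (hv : v ∈ e) (hv' : v ∈ e') (hc : c ∈ L e) (hc' : c ∈ L e') : e = e' := by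
  obtain ⟨x, rfl⟩ := Sym2.mem_iff_exists.1 hv
  obtain ⟨y, rfl⟩ := Sym2.mem_iff_exists.1 hv'
  by_contra hne
  have hxy : x ≠ y := fun h => hne (h ▸ rfl)
  exact disjoint_left.1 (hL v x y (by simpa using he) (by simpa using he') hxy) hc hc'

variable [Fintype V] [DecidableEq V]

theorem card_mul_two_le_of_vertexDisjoint {M : Finset (Sym2 V)}
    (hM : ∀ e ∈ M, ¬ e.IsDiag) (hdisj : ∀ v : V, ∀ e ∈ M, ∀ e' ∈ M, v ∈ e → v ∈ e' → e = e') :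
    #M * 2 ≤ Fintype.card V := by
  simpa using card_mul_le_card_mul (s := M) (t := univ) (m := 2) (n := 1) (fun e v => v ∈ e)
    (fun e he => by
      rw [bipartiteAbove, ← Sym2.card_toFinset_of_not_isDiag e (hM e he)]
      exact (congrArg card (by ext; simp [Sym2.mem_toFinset])).le)
    (fun v _ => card_le_one.2 fun e he e' he' => by
      simp only [bipartiteBelow, mem_filter] at he he'
      exact hdisj v e he.1 e' he'.1 he.2 he'.2)

theorem DisjointOnAdjacentEdges.sum_card_le [Fintype C]
    {L : Sym2 V → Finset C} (hL : DisjointOnAdjacentEdges L) :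
    ∑ e ∈ univ.filter (fun e : Sym2 V => ¬ e.IsDiag), #(L e) ≤
      Fintype.card C * (Fintype.card V / 2) := by
  classical
  set E := univ.filter (fun e : Sym2 V => ¬ e.IsDiag)
  have colorClass_card (c : C) :
      #(E.bipartiteBelow (fun e c => c ∈ L e) c) ≤ Fintype.card V / 2 := by
    rw [Nat.le_div_iff_mul_le two_pos]
    refine card_mul_two_le_of_vertexDisjoint (fun e he => ?_) fun v e he e' he' hv hv' => ?_
    · simp_all [bipartiteBelow, E]
    · simp only [bipartiteBelow, mem_filter, E, mem_univ, true_and] at he he'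
      exact hL.eq_of_mem he.1 he'.1 hv hv' he.2 he'.2
  calc ∑ e ∈ E, #(L e) = ∑ e ∈ E, #(univ.bipartiteAbove (fun e c => c ∈ L e) e) := by
        simp [bipartiteAbove]
    _ = ∑ c, #(E.bipartiteBelow (fun e c => c ∈ L e) c) :=
        sum_card_bipartiteAbove_eq_sum_card_bipartiteBelow _
    _ ≤ ∑ _c : C, Fintype.card V / 2 := sum_le_sum fun c _ => colorClass_card c
    _ = Fintype.card C * (Fintype.card V / 2) := by simp

theorem DisjointOnAdjacentEdges.prod_card_le [Fintype C]
    {L : Sym2 V → Finset C} (hL : DisjointOnAdjacentEdges L) :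
    ∏ e ∈ univ.filter (fun e : Sym2 V => ¬ e.IsDiag), (#(L e) : ℝ) ≤
      (Fintype.card C * (Fintype.card V / 2 : ℕ) / (Fintype.card V).choose 2) ^
        (Fintype.card V).choose 2 := by
  have hE : #(univ.filter (fun e : Sym2 V => ¬ e.IsDiag)) = (Fintype.card V).choose 2 := by
    rw [← Sym2.card_subtype_not_diag, Fintype.card_subtype]
  rw [← hE]
  exact Real.prod_le_div_card_pow_of_sum_le (fun _ _ => Nat.cast_nonneg _)
    (by exact_mod_cast hL.sum_card_le)

end

theorem stmt11_general (r k : ℕ)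
    -- `L` assigns a color list to each edge of the complete graph `K_k`
    (L : Sym2 (Fin k) → Finset (Fin r))
    -- `K₃⁽²⁾`-freeness: the lists of the edges of any triangle are pairwise disjoint
    (hfree : ∀ a b c : Fin k, a ≠ b → a ≠ c → b ≠ c →
      Disjoint (L s(a, b)) (L s(a, c)) ∧ Disjoint (L s(a, b)) (L s(b, c)) ∧
      Disjoint (L s(a, c)) (L s(b, c))) :
    (∏ e ∈ Finset.univ.filter (fun e : Sym2 (Fin k) => ¬ e.IsDiag), ((L e).card : ℝ)) ≤
      (((r : ℝ) * ((k / 2 : ℕ) : ℝ)) / ((k : ℝ) * ((k : ℝ) - 1) / 2)) ^ (k * (k - 1) / 2) := by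
  have h := DisjointOnAdjacentEdges.prod_card_le fun a b c hab hac hbc =>
    (hfree a b c hab hac hbc).1
  rwa [Fintype.card_fin, Fintype.card_fin, Nat.cast_choose_two, Nat.choose_two_right] at h

theorem stmt11 (r k : ℕ) (hr : 2 ≤ r) (hk : 3 ≤ k)
    -- `L` assigns a color list to each edge of the complete graph `K_k`
    (L : Sym2 (Fin k) → Finset (Fin r))
    (hL2 : ∀ e : Sym2 (Fin k), ¬ e.IsDiag → 2 ≤ (L e).card)
    -- `K₃⁽²⁾`-freeness: the lists of the edges of any triangle are pairwise disjoint
    (hfree : ∀ a b c : Fin k, a ≠ b → a ≠ c → b ≠ c →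
      Disjoint (L s(a, b)) (L s(a, c)) ∧ Disjoint (L s(a, b)) (L s(b, c)) ∧
      Disjoint (L s(a, c)) (L s(b, c))) :
    (∏ e ∈ Finset.univ.filter (fun e : Sym2 (Fin k) => ¬ e.IsDiag), ((L e).card : ℝ)) ≤
      (((r : ℝ) * ((k / 2 : ℕ) : ℝ)) / ((k : ℝ) * ((k : ℝ) - 1) / 2)) ^ (k * (k - 1) / 2) :=
  stmt11_general r k L hfree
end

section
/- Let r ≥ 6 be an integer and let H be a multicolored cluster graph with color set {1,…,r} that is K₃⁽²⁾-free and in which every edge e satisfies |L_e| ≥ 2. Then for every 2-element subset S ⊆ {1,…,r}, the subgraph of H whose edge set consists of all edges e with |L_e| ≥ r−3 together with all edges e with |L_e| ≤ r−4 and L_e ∩ S ≠ ∅ is triangle-free. -/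
open SimpleGraph

/-- The edge `e` belongs to the subgraph consisting of the edges with `|L_e| ≥ r - 3`
together with the edges with `|L_e| ≤ r - 4` and `L_e ∩ S ≠ ∅`. -/
def InSub {V : Type*} {r : ℕ} (H : SimpleGraph V) (L : H.edgeSet → Finset (Fin r))
    (S : Finset (Fin r)) (e : H.edgeSet) : Prop :=
  r - 3 ≤ (L e).card ∨ ((L e).card ≤ r - 4 ∧ (L e ∩ S).Nonempty)

/-!
Three pairwise disjoint lists with at least two colors each leave at most `r - 4` colors
to any one of them, so no edge of a triangle is in the subgraph through the condition
`|L_e| ≥ r - 3`. Hence all three lists meet `S`, and being disjoint they meet it in three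
distinct colors, which is impossible when `|S| = 2`.
-/

namespace Finset

variable {α : Type*} [DecidableEq α] {A B C U : Finset α}

theorem card_add_card_add_card_le_of_subset (hA : A ⊆ U) (hB : B ⊆ U) (hC : C ⊆ U)
    (hAB : Disjoint A B) (hAC : Disjoint A C) (hBC : Disjoint B C) :
    #A + #B + #C ≤ #U := by
  have hABC : Disjoint (A ∪ B) C := disjoint_union_left.mpr ⟨hAC, hBC⟩
  calc #A + #B + #C = #(A ∪ B ∪ C) := by
        rw [card_union_of_disjoint hABC, card_union_of_disjoint hAB]
    _ ≤ #U := card_le_card (union_subset (union_subset hA hB) hC)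

theorem three_le_card_of_disjoint_of_inter_nonempty (hAB : Disjoint A B)
    (hAC : Disjoint A C) (hBC : Disjoint B C) (S : Finset α) (hAS : (A ∩ S).Nonempty)
    (hBS : (B ∩ S).Nonempty) (hCS : (C ∩ S).Nonempty) : 3 ≤ #S := by
  have := card_add_card_add_card_le_of_subset (A := A ∩ S) (B := B ∩ S) (C := C ∩ S)
    inter_subset_right inter_subset_right inter_subset_right (hAB.mono inter_subset_left inter_subset_left)
    (hAC.mono inter_subset_left inter_subset_left) (hBC.mono inter_subset_left inter_subset_left)
  have := hAS.card_pos
  have := hBS.card_pos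
  have := hCS.card_pos
  omega

end Finset

theorem InSub.inter_nonempty {V : Type*} {r : ℕ} {H : SimpleGraph V}
    {L : H.edgeSet → Finset (Fin r)} {S : Finset (Fin r)} {e : H.edgeSet}
    (he : InSub H L S e) (hcard : (L e).card + 4 ≤ r) : (L e ∩ S).Nonempty := by
  rcases he with hlarge | ⟨-, hmeet⟩
  · omega
  · exact hmeet

theorem stmt13_general (r : ℕ) {V : Type*} (H : SimpleGraph V)
    (L : H.edgeSet → Finset (Fin r))
    (hfree : ClusterK32Free H L)
    (h2 : ∀ e : H.edgeSet, 2 ≤ (L e).card)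
    (S : Finset (Fin r)) (hS : S.card = 2) :
    ∀ (a b d : V) (hab : H.Adj a b) (hbd : H.Adj b d) (had : H.Adj a d),
      ¬ (InSub H L S ⟨s(a, b), hab⟩ ∧ InSub H L S ⟨s(b, d), hbd⟩ ∧
         InSub H L S ⟨s(a, d), had⟩) := by
  rintro a b d hab hbd had ⟨hinAB, hinBD, hinAD⟩
  obtain ⟨hAB, hAC, hBC⟩ := hfree a b d hab hbd had
  have hsum := Finset.card_add_card_add_card_le_of_subset (Finset.subset_univ _)
    (Finset.subset_univ _) (Finset.subset_univ _) hAB hAC hBC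
  rw [Finset.card_univ, Fintype.card_fin] at hsum
  have h2AB := h2 ⟨s(a, b), hab⟩
  have h2BD := h2 ⟨s(b, d), hbd⟩
  have h2AD := h2 ⟨s(a, d), had⟩
  have := Finset.three_le_card_of_disjoint_of_inter_nonempty hAB hAC hBC S
    (hinAB.inter_nonempty (by omega)) (hinBD.inter_nonempty (by omega))
    (hinAD.inter_nonempty (by omega))
  omega

theorem stmt13 (r : ℕ) (hr : 6 ≤ r) {V : Type*} (H : SimpleGraph V)
    (L : H.edgeSet → Finset (Fin r))
    (hfree : ClusterK32Free H L)
    (h2 : ∀ e : H.edgeSet, 2 ≤ (L e).card)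
    (S : Finset (Fin r)) (hS : S.card = 2) :
    ∀ (a b d : V) (hab : H.Adj a b) (hbd : H.Adj b d) (had : H.Adj a d),
      ¬ (InSub H L S ⟨s(a, b), hab⟩ ∧ InSub H L S ⟨s(b, d), hbd⟩ ∧
         InSub H L S ⟨s(a, d), had⟩) :=
  stmt13_general r H L hfree h2 S hS
end

section
/- Let r ≥ 2 be an integer and let H be a multicolored cluster graph on m vertices with color set {1,…,r} that is K₃⁽²⁾-free and in which every edge e satisfies |L_e| ≥ 2. Then the subgraph of H formed by all edges e with |L_e| ≥ ⌊r/3⌋ + 1 is triangle-free; consequently the number of such edges is at most ⌊m²/4⌋. -/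
open SimpleGraph

open Finset

lemma turan_adj (m : ℕ) (v w : Fin m) : (turanGraph m 2).Adj v w ↔ v.val % 2 ≠ w.val % 2 := by
  simp [turanGraph, Fin.ext_iff, Fin.mod_def]

lemma count_odd (n : ℕ) : ((range n).filter (fun x => x % 2 = 1)).card = n / 2 := by
  induction n with
  | zero => simp
  | succ n ih =>
    rw [range_add_one, filter_insert]
    by_cases h : n % 2 = 1 <;> simp [h, ih] <;> omega

lemma count_even (n : ℕ) : ((range n).filter (fun x => x % 2 = 0)).card = (n + 1) / 2 := by
  induction n with
  | zero => simp
  | succ n ih =>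
    rw [range_add_one, filter_insert]
    by_cases h : n % 2 = 0 <;> simp [h, ih] <;> omega

lemma fin_count (m : ℕ) (p : ℕ → Prop) [DecidablePred p] :
    (univ.filter (fun v : Fin m => p v.val)).card = ((range m).filter p).card := by
  apply Finset.card_bij (fun v _ => v.val)
  · intro a ha; simp only [mem_filter, mem_univ, true_and] at ha
    simp only [mem_filter, mem_range]; exact ⟨a.isLt, ha⟩
  · intro a _ b _ h; exact Fin.ext h
  · intro b hb; simp only [mem_filter, mem_range] at hb
    exact ⟨⟨b, hb.1⟩, by simp only [mem_filter, mem_univ, true_and]; exact hb.2, rfl⟩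

lemma turan_edges (m : ℕ) :
    (turanGraph m 2).edgeFinset =
      ((univ.filter (fun v : Fin m => v.val % 2 = 0)) ×ˢ
       (univ.filter (fun v : Fin m => v.val % 2 = 1))).image (fun p => s(p.1, p.2)) := by
  ext x
  induction x using Sym2.ind with
  | _ a b =>
    simp only [mem_edgeFinset, mem_edgeSet, turan_adj, mem_image, mem_product, mem_filter,
      mem_univ, true_and, Prod.exists, Sym2.eq_iff]
    constructor
    · intro h
      rcases Nat.mod_two_eq_zero_or_one a.val with ha | ha
      · exact ⟨a, b, ⟨ha, by omega⟩, Or.inl ⟨rfl, rfl⟩⟩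
      · exact ⟨b, a, ⟨by omega, ha⟩, Or.inr ⟨rfl, rfl⟩⟩
    · rintro ⟨c, d, ⟨hc, hd⟩, h | h⟩ <;>
        · obtain ⟨rfl, rfl⟩ := h; omega

lemma turan_card (m : ℕ) : (turanGraph m 2).edgeFinset.card = m ^ 2 / 4 := by
  have hinj : Set.InjOn (fun p : Fin m × Fin m => s(p.1, p.2))
      ((((univ.filter (fun v : Fin m => v.val % 2 = 0)) ×ˢ
       (univ.filter (fun v : Fin m => v.val % 2 = 1)) : Finset _)) : Set _) := by
    rintro ⟨a, b⟩ hab ⟨c, d⟩ hcd h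
    simp only [mem_coe, mem_product, mem_filter, mem_univ, true_and] at hab hcd
    simp only [Sym2.eq_iff] at h
    rcases h with ⟨rfl, rfl⟩ | ⟨rfl, rfl⟩
    · rfl
    · exfalso; omega
  rw [turan_edges, Finset.card_image_of_injOn hinj, card_product,
    fin_count m (fun x => x % 2 = 0), fin_count m (fun x => x % 2 = 1),
    count_even, count_odd]
  rcases Nat.even_or_odd m with ⟨k, rfl⟩ | ⟨k, rfl⟩
  · have h1 : (k + k + 1) / 2 = k := by omega
    have h2 : (k + k) / 2 = k := by omega
    have h3 : (k + k) ^ 2 = 4 * (k * k) := by ring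
    rw [h1, h2, h3]; omega
  · have h1 : (2 * k + 1 + 1) / 2 = k + 1 := by omega
    have h2 : (2 * k + 1) / 2 = k := by omega
    have h3 : (2 * k + 1) ^ 2 = 4 * (k * k + k) + 1 := by ring
    rw [h1, h2, h3]
    have h4 : (k + 1) * k = k * k + k := by ring
    omega

lemma mantel {m : ℕ} (G : SimpleGraph (Fin m)) [DecidableRel G.Adj]
    (h : G.CliqueFree 3) : G.edgeFinset.card ≤ m ^ 2 / 4 := by
  obtain ⟨T, _, hT⟩ := exists_isTuranMaximal (V := Fin m) (r := 2) two_pos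
  obtain ⟨f⟩ := hT.nonempty_iso_turanGraph
  calc G.edgeFinset.card ≤ T.edgeFinset.card := hT.2 h
    _ = (turanGraph (Fintype.card (Fin m)) 2).edgeFinset.card := f.card_edgeFinset_eq
    _ = m ^ 2 / 4 := by rw [Fintype.card_fin, turan_card]

theorem stmt15 (r m : ℕ) (hr : 2 ≤ r) (H : SimpleGraph (Fin m)) [Fintype H.edgeSet]
    (L : H.edgeSet → Finset (Fin r))
    (hfree : ClusterK32Free H L)
    (h2 : ∀ e : H.edgeSet, 2 ≤ (L e).card) :
    (∀ (a b d : Fin m) (hab : H.Adj a b) (hbd : H.Adj b d) (had : H.Adj a d),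
      ¬ (r / 3 + 1 ≤ (L ⟨s(a, b), hab⟩).card ∧ r / 3 + 1 ≤ (L ⟨s(b, d), hbd⟩).card ∧
         r / 3 + 1 ≤ (L ⟨s(a, d), had⟩).card)) ∧
    (Finset.univ.filter (fun e : H.edgeSet => r / 3 + 1 ≤ (L e).card)).card ≤ m ^ 2 / 4 := by
  classical
  have part1 : ∀ (a b d : Fin m) (hab : H.Adj a b) (hbd : H.Adj b d) (had : H.Adj a d),
      ¬ (r / 3 + 1 ≤ (L ⟨s(a, b), hab⟩).card ∧ r / 3 + 1 ≤ (L ⟨s(b, d), hbd⟩).card ∧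
         r / 3 + 1 ≤ (L ⟨s(a, d), had⟩).card) := by
    intro a b d hab hbd had ⟨hA, hB, hC⟩
    obtain ⟨d12, d13, d23⟩ := hfree a b d hab hbd had
    set A := L ⟨s(a, b), hab⟩
    set B := L ⟨s(b, d), hbd⟩
    set C := L ⟨s(a, d), had⟩
    have hcard : (A ∪ B ∪ C).card = A.card + B.card + C.card := by
      rw [Finset.card_union_of_disjoint (Finset.disjoint_union_left.mpr ⟨d13, d23⟩),
        Finset.card_union_of_disjoint d12]
    have hle : (A ∪ B ∪ C).card ≤ r := by
      have := Finset.card_le_univ (A ∪ B ∪ C)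
      simpa using this
    omega
  refine ⟨part1, ?_⟩
  let G : SimpleGraph (Fin m) :=
    { Adj := fun a b => ∃ h : H.Adj a b, r / 3 + 1 ≤ (L ⟨s(a, b), h⟩).card
      symm := by
        constructor
        rintro a b ⟨h, hc⟩
        refine ⟨h.symm, ?_⟩
        have : (⟨s(b, a), h.symm⟩ : H.edgeSet) = ⟨s(a, b), h⟩ :=
          Subtype.ext (Sym2.eq_swap)
        rw [this]; exact hc
      loopless := by constructor; rintro a ⟨h, -⟩; exact H.loopless.irrefl a h }
  have hGfree : G.CliqueFree 3 := by
    intro s hs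
    rw [is3Clique_iff] at hs
    obtain ⟨x, y, z, ⟨hxy, hxy'⟩, ⟨hxz, hxz'⟩, ⟨hyz, hyz'⟩, rfl⟩ := hs
    exact part1 x y z hxy hyz hxz ⟨hxy', hyz', hxz'⟩
  have hcard : (Finset.univ.filter (fun e : H.edgeSet => r / 3 + 1 ≤ (L e).card)).card
      = G.edgeFinset.card := by
    apply Finset.card_bij (fun e _ => e.val)
    · rintro ⟨x, hx⟩ he
      simp only [Finset.mem_filter, Finset.mem_univ, true_and] at he
      induction x using Sym2.ind with
      | _ a b =>
        rw [mem_edgeFinset, mem_edgeSet]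
        exact ⟨hx, he⟩
    · intro e _ e' _ h
      exact Subtype.ext h
    · intro x hx
      rw [mem_edgeFinset] at hx
      induction x using Sym2.ind with
      | _ a b =>
        rw [mem_edgeSet] at hx
        obtain ⟨h, hc⟩ := hx
        exact ⟨⟨s(a, b), h⟩, by simpa using hc, rfl⟩
  rw [hcard]
  exact mantel G hGfree
end
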